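/- arXiv:2602.23025 — 4 statements merged into one kernel-verified Lean document; each statement's English description precedes it below -/
import Mathlib

section
/- Let (G_m) be a multiple-gamma sequence. Then for all m, n ∈ ℕ: (i) Δ^{m+1}(ln∘G_m)(j) → 0 as j → ∞ along positive integers (i.e., ln∘G_m ∈ D^{m+1}); and (ii) ln∘G_m is (m+n)-convex on (0,∞) if n is even, and (m+n)-concave on (0,∞) if n is odd. -/
open Set Filter
open scoped ContDiff


open Finset Filter

/-- Forward difference operator: `Δ f x = f (x + 1) - f x`. -/
noncomputable def fdiff (f : ℝ → ℝ) : ℝ → ℝ := fun x => f (x + 1) - f x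

/-- Generalized binomial coefficient `C(x, j) = x (x-1) ⋯ (x-j+1) / j!`. -/
noncomputable def gbinom (x : ℝ) (j : ℕ) : ℝ :=
  (∏ i ∈ Finset.range j, (x - i)) / (Nat.factorial j)

/-- Divided difference of `f` at the points `x 0, …, x (n-1)`. -/
noncomputable def divDiff (f : ℝ → ℝ) {n : ℕ} (x : Fin n → ℝ) : ℝ :=
  ∑ i, f (x i) / ∏ j ∈ Finset.univ.erase i, (x i - x j)

/-- `f` is `p`-convex on the set `S`: every divided difference of `f`
at `p + 2` pairwise distinct points of `S` is nonnegative. -/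
def ConvexOrderOn (f : ℝ → ℝ) (p : ℕ) (S : Set ℝ) : Prop :=
  ∀ x : Fin (p + 2) → ℝ, (∀ i, x i ∈ S) → Function.Injective x → 0 ≤ divDiff f x

/-- The class `K^p`: functions that are eventually `p`-convex or eventually `p`-concave. -/
def EvK (p : ℕ) (f : ℝ → ℝ) : Prop :=
  (∃ a > (0 : ℝ), ConvexOrderOn f p (Set.Ioi a)) ∨
    (∃ a > (0 : ℝ), ConvexOrderOn (fun x => -f x) p (Set.Ioi a))

/-- The class `D^p`: functions with `Δ^p f (n) → 0` as `n → ∞` along the integers. -/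
def DD (p : ℕ) (f : ℝ → ℝ) : Prop :=
  Filter.Tendsto (fun n : ℕ => (fdiff^[p] f) n) Filter.atTop (nhds 0)

/-- The digamma function `ψ = Γ'/Γ`. -/
noncomputable def digamma (x : ℝ) : ℝ := deriv Real.Gamma x / Real.Gamma x

/-- A multiple-gamma sequence: `G 0 = id`, `G (m+1) (x+1) = G m x * G (m+1) x`,
`G m 1 = 1`, each `G m` is positive and `C^∞` on `(0,∞)`, and the `m`-th derivative
of `ln ∘ G m` is increasing on `(0,∞)`. -/
def IsMultipleGammaSeq (G : ℕ → ℝ → ℝ) : Prop :=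
  (∀ m, ∀ x > (0 : ℝ), 0 < G m x) ∧
  (∀ m, ContDiffOn ℝ (⊤ : ℕ∞) (G m) (Set.Ioi 0)) ∧
  (∀ x > (0 : ℝ), G 0 x = x) ∧
  (∀ m, ∀ x > (0 : ℝ), G (m + 1) (x + 1) = G m x * G (m + 1) x) ∧
  (∀ m, G m 1 = 1) ∧
  (∀ m, StrictMonoOn
    (iteratedDerivWithin m (fun x => Real.log (G m x)) (Set.Ioi 0)) (Set.Ioi 0))


lemma IDW_eq {f : ℝ → ℝ} {s : Set ℝ} (hs : IsOpen s) {x : ℝ} (hx : x ∈ s) (n : ℕ) :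
    iteratedDerivWithin n f s x = iteratedDeriv n f x := by
  rw [iteratedDerivWithin, iteratedDeriv, iteratedFDerivWithin_of_isOpen n hs hx]

lemma contDiffOn_iterD {f : ℝ → ℝ} {s : Set ℝ} (hs : IsOpen s)
    (hf : ContDiffOn ℝ ∞ f s) (k : ℕ) : ContDiffOn ℝ ∞ (iteratedDeriv k f) s := by
  induction k with
  | zero => simpa [iteratedDeriv_zero]
  | succ k ih =>
    rw [iteratedDeriv_succ]
    exact ((contDiffOn_infty_iff_deriv_of_isOpen hs).1 ih).2

lemma hasDerivAt_iterD {f : ℝ → ℝ} {s : Set ℝ} (hs : IsOpen s)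
    (hf : ContDiffOn ℝ ∞ f s) (k : ℕ) {x : ℝ} (hx : x ∈ s) :
    HasDerivAt (iteratedDeriv k f) (iteratedDeriv (k + 1) f x) x := by
  have h1 : DifferentiableOn ℝ (iteratedDeriv k f) s :=
    ((contDiffOn_infty_iff_deriv_of_isOpen hs).1 (contDiffOn_iterD hs hf k)).1
  have h2 : DifferentiableAt ℝ (iteratedDeriv k f) x :=
    (h1 x hx).differentiableAt (hs.mem_nhds hx)
  rw [iteratedDeriv_succ]
  exact h2.hasDerivAt

lemma continuousOn_iterD {f : ℝ → ℝ} {s : Set ℝ} (hs : IsOpen s)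
    (hf : ContDiffOn ℝ ∞ f s) (k : ℕ) : ContinuousOn (iteratedDeriv k f) s :=
  (contDiffOn_iterD hs hf k).continuousOn


lemma contDiffOn_iterD' {f : ℝ → ℝ} {s : Set ℝ} (hs : IsOpen s)
    (hf : ContDiffOn ℝ ∞ f s) (k : ℕ) : ContDiffOn ℝ ∞ (iteratedDeriv k f) s := by
  induction k with
  | zero => simpa [iteratedDeriv_zero]
  | succ k ih =>
    rw [iteratedDeriv_succ]
    exact ((contDiffOn_infty_iff_deriv_of_isOpen hs).1 ih).2

lemma hasDerivAt_iterD' {f : ℝ → ℝ} {s : Set ℝ} (hs : IsOpen s)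
    (hf : ContDiffOn ℝ ∞ f s) (k : ℕ) {x : ℝ} (hx : x ∈ s) :
    HasDerivAt (iteratedDeriv k f) (iteratedDeriv (k + 1) f x) x := by
  have h1 : DifferentiableOn ℝ (iteratedDeriv k f) s :=
    ((contDiffOn_infty_iff_deriv_of_isOpen hs).1 (contDiffOn_iterD' hs hf k)).1
  have h2 : DifferentiableAt ℝ (iteratedDeriv k f) x :=
    (h1 x hx).differentiableAt (hs.mem_nhds hx)
  rw [iteratedDeriv_succ]
  exact h2.hasDerivAt

lemma iterD_congr_open {f g : ℝ → ℝ} {s : Set ℝ} (hs : IsOpen s)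
    (h : Set.EqOn f g s) (k : ℕ) : Set.EqOn (iteratedDeriv k f) (iteratedDeriv k g) s := by
  induction k with
  | zero => simpa [iteratedDeriv_zero]
  | succ k ih =>
    intro x hx
    rw [iteratedDeriv_succ, iteratedDeriv_succ]
    exact Filter.EventuallyEq.deriv_eq (Filter.eventuallyEq_of_mem (hs.mem_nhds hx) ih)

lemma iterD_add_on {f g : ℝ → ℝ} {s : Set ℝ} (hs : IsOpen s)
    (hf : ContDiffOn ℝ ∞ f s) (hg : ContDiffOn ℝ ∞ g s) (k : ℕ) {x : ℝ} (hx : x ∈ s) :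
    iteratedDeriv k (fun y => f y + g y) x = iteratedDeriv k f x + iteratedDeriv k g x := by
  induction k generalizing x with
  | zero => simp [iteratedDeriv_zero]
  | succ k ih =>
    rw [iteratedDeriv_succ]
    have : deriv (iteratedDeriv k fun y => f y + g y) x
        = deriv (fun y => iteratedDeriv k f y + iteratedDeriv k g y) x := by
      apply Filter.EventuallyEq.deriv_eq
      exact Filter.eventuallyEq_of_mem (hs.mem_nhds hx) (fun y hy => ih hy)
    rw [this, deriv_fun_add ((hasDerivAt_iterD' hs hf k hx).differentiableAt)
      ((hasDerivAt_iterD' hs hg k hx).differentiableAt), ← iteratedDeriv_succ, ← iteratedDeriv_succ]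

lemma iterD_shift {f : ℝ → ℝ} (k : ℕ) (x : ℝ) :
    iteratedDeriv k (fun y => f (y + 1)) x = iteratedDeriv k f (x + 1) := by
  rw [iteratedDeriv_comp_add_const]

/-- Delta relation propagates to all iterated derivatives. -/
lemma iterD_delta {F F' : ℝ → ℝ}
    (hF : ContDiffOn ℝ ∞ F (Set.Ioi 0)) (hF' : ContDiffOn ℝ ∞ F' (Set.Ioi 0))
    (h : ∀ x ∈ Set.Ioi (0:ℝ), F (x + 1) = F' x + F x) (k : ℕ) :
    ∀ x ∈ Set.Ioi (0:ℝ), iteratedDeriv k F (x + 1)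
      = iteratedDeriv k F' x + iteratedDeriv k F x := by
  intro x hx
  have h1 : Set.EqOn (fun y => F (y + 1)) (fun y => F' y + F y) (Set.Ioi 0) := by
    intro y hy; exact h y hy
  rw [← iterD_shift k x, iterD_congr_open isOpen_Ioi h1 k hx,
    iterD_add_on isOpen_Ioi hF' hF k hx]

noncomputable def Aa (S : ℕ → ℝ → ℝ) (j : ℕ) (x : ℝ) : ℝ := (-1)^j * S j x

section Core

variable {S : ℕ → ℝ → ℝ}
variable (hS : ∀ j, ∀ x ∈ Set.Ioi (0:ℝ), HasDerivAt (S j) (S (j+1) x) x)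
variable (hSsign : ∀ j, ∀ x ∈ Set.Ioi (0:ℝ), 0 ≤ (-1)^j * S j x)

include hS hSsign

omit hS in
lemma Aa_nonneg : ∀ j, ∀ x ∈ Set.Ioi (0:ℝ), 0 ≤ Aa S j x := hSsign

omit hSsign in
lemma Aa_hasDeriv : ∀ j, ∀ x ∈ Set.Ioi (0:ℝ), HasDerivAt (Aa S j) (-(Aa S (j+1) x)) x := by
  intro j x hx
  have h := (hS j x hx).const_mul ((-1:ℝ)^j)
  have heq : (-1:ℝ)^j * S (j+1) x = -(Aa S (j+1) x) := by
    simp only [Aa, pow_succ]; ring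
  rw [heq] at h
  exact h

lemma Aa_anti (j : ℕ) : AntitoneOn (Aa S j) (Set.Ioi 0) := by
  apply antitoneOn_of_deriv_nonpos (convex_Ioi 0)
  · intro x hx
    exact (Aa_hasDeriv hS j x hx |>.continuousAt).continuousWithinAt
  · rw [interior_Ioi]
    intro x hx
    exact (Aa_hasDeriv hS j x hx).differentiableAt.differentiableWithinAt
  · rw [interior_Ioi]
    intro x hx
    rw [(Aa_hasDeriv hS j x hx).deriv]
    have h : 0 ≤ Aa S (j+1) x := hSsign (j+1) x hx
    linarith

omit hS in
lemma Aa_abs (j : ℕ) {x : ℝ} (hx : x ∈ Set.Ioi (0:ℝ)) : |S j x| = Aa S j x := by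
  have h2 := hSsign j x hx
  simp only [Aa]
  rcases Nat.even_or_odd j with he | ho
  · rw [he.neg_one_pow] at h2 ⊢
    rw [one_mul] at h2 ⊢
    exact abs_of_nonneg h2
  · rw [ho.neg_one_pow] at h2 ⊢
    rw [neg_one_mul] at h2 ⊢
    rw [abs_of_nonpos (by linarith)]

/-- Telescoping bound for partial sums. -/
lemma Aa_sum_le (j : ℕ) {x : ℝ} (hx : (0:ℝ) < x) (K : ℕ) :
    ∑ k ∈ Finset.range K, Aa S (j+1) (x + 1 + k) ≤ Aa S j x := by
  have key : ∀ k : ℕ, Aa S (j+1) (x + 1 + k)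
      ≤ Aa S j (x + k) - Aa S j (x + ((k+1 : ℕ) : ℝ)) := by
    intro k
    have hk0 : (0:ℝ) ≤ k := Nat.cast_nonneg k
    have hab : x + (k:ℝ) < x + ((k+1:ℕ):ℝ) := by push_cast; linarith
    have hsub : Set.Icc (x + (k:ℝ)) (x + ((k+1:ℕ):ℝ)) ⊆ Set.Ioi 0 := by
      intro t ht; have := ht.1; simp only [Set.mem_Ioi]; linarith
    obtain ⟨ξ, hξ, hslope⟩ := exists_hasDerivAt_eq_slope (S j) (S (j+1)) hab
      (fun t ht => ((hS j t (hsub ht)).continuousAt).continuousWithinAt)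
      (fun t ht => hS j t (hsub (Set.mem_Icc_of_Ioo ht)))
    have hξpos : ξ ∈ Set.Ioi (0:ℝ) := hsub (Set.mem_Icc_of_Ioo hξ)
    have hden : x + ((k+1:ℕ):ℝ) - (x + k) = 1 := by push_cast; ring
    rw [hden, div_one] at hslope
    have h1 : Aa S (j+1) ξ = Aa S j (x + k) - Aa S j (x + ((k+1:ℕ):ℝ)) := by
      simp only [Aa, hslope, pow_succ]
      ring
    have h2 : Aa S (j+1) (x + 1 + k) ≤ Aa S (j+1) ξ := by
      apply Aa_anti hS hSsign (j+1) hξpos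
      · simp only [Set.mem_Ioi]; linarith
      · have := hξ.2; push_cast at this ⊢; linarith
    linarith
  calc ∑ k ∈ Finset.range K, Aa S (j+1) (x + 1 + k)
      ≤ ∑ k ∈ Finset.range K, ((fun i : ℕ => Aa S j (x + i)) k
          - (fun i : ℕ => Aa S j (x + i)) (k+1)) :=
        Finset.sum_le_sum (fun k _ => key k)
    _ = Aa S j (x + (0:ℕ)) - Aa S j (x + K) := Finset.sum_range_sub' (fun i : ℕ => Aa S j (x + i)) K
    _ ≤ Aa S j x := by
        have h3 : (0:ℝ) < x + K := by have : (0:ℝ) ≤ K := Nat.cast_nonneg K; linarith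
        have := Aa_nonneg hSsign j (x + K) h3
        simp only [Nat.cast_zero, add_zero]
        linarith

lemma Aa_summable (j : ℕ) {x : ℝ} (hx : (0:ℝ) < x) :
    Summable (fun k : ℕ => Aa S (j+1) (x + k)) := by
  have h1 : Summable (fun k : ℕ => Aa S (j+1) (x + 1 + k)) := by
    apply summable_of_sum_range_le (c := Aa S j x)
    · intro k
      have hk0 : (0:ℝ) ≤ k := Nat.cast_nonneg k
      exact Aa_nonneg hSsign (j+1) _ (by simp only [Set.mem_Ioi]; linarith)
    · intro K; exact Aa_sum_le hS hSsign j hx K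
  have h2 : (fun k : ℕ => Aa S (j+1) (x + 1 + k)) = (fun k : ℕ => Aa S (j+1) (x + ((k+1:ℕ):ℝ))) := by
    funext k; congr 1; push_cast; ring
  rw [h2] at h1
  exact (summable_nat_add_iff 1).mp h1

lemma Aa_tsum_le (j : ℕ) {x : ℝ} (hx : (0:ℝ) < x) :
    ∑' k : ℕ, Aa S (j+1) (x + k) ≤ Aa S (j+1) x + Aa S j x := by
  rw [Summable.tsum_eq_zero_add (Aa_summable hS hSsign j hx)]
  have h0 : Aa S (j+1) (x + ((0:ℕ):ℝ)) = Aa S (j+1) x := by norm_num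
  rw [h0]
  have htail : ∑' k : ℕ, Aa S (j+1) (x + ((k+1:ℕ):ℝ)) ≤ Aa S j x := by
    apply Summable.tsum_le_of_sum_range_le ((summable_nat_add_iff 1).2 (Aa_summable hS hSsign j hx))
    intro K
    calc ∑ k ∈ Finset.range K, Aa S (j+1) (x + ((k+1:ℕ):ℝ))
        = ∑ k ∈ Finset.range K, Aa S (j+1) (x + 1 + k) := by
          apply Finset.sum_congr rfl; intro k _; congr 1; push_cast; ring
      _ ≤ Aa S j x := Aa_sum_le hS hSsign j hx K
  linarith


noncomputable def Tt (S : ℕ → ℝ → ℝ) (j : ℕ) (x : ℝ) : ℝ := ∑' k : ℕ, S (j+1) (x + k)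

lemma S_summable (j : ℕ) {x : ℝ} (hx : (0:ℝ) < x) :
    Summable (fun k : ℕ => S (j+1) (x + k)) := by
  apply Summable.of_abs
  have : (fun k : ℕ => |S (j+1) (x + k)|) = fun k : ℕ => Aa S (j+1) (x + k) := by
    funext k
    have hk0 : (0:ℝ) ≤ k := Nat.cast_nonneg k
    exact Aa_abs hSsign (j+1) (by simp only [Set.mem_Ioi]; linarith)
  rw [this]
  exact Aa_summable hS hSsign j hx

lemma Tt_abs_le (j : ℕ) {x : ℝ} (hx : (0:ℝ) < x) :
    |Tt S j x| ≤ Aa S (j+1) x + Aa S j x := by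
  have h1 : |Tt S j x| ≤ ∑' k : ℕ, |S (j+1) (x + k)| := by
    simpa [Tt] using norm_tsum_le_tsum_norm (f := fun k : ℕ => S (j+1) (x+k)) (by
      have : (fun k : ℕ => ‖S (j+1) (x + k)‖) = fun k : ℕ => Aa S (j+1) (x + k) := by
        funext k
        have hk0 : (0:ℝ) ≤ k := Nat.cast_nonneg k
        exact Aa_abs hSsign (j+1) (by simp only [Set.mem_Ioi]; linarith)
      rw [this]; exact Aa_summable hS hSsign j hx)
  have h2 : (fun k : ℕ => |S (j+1) (x + k)|) = fun k : ℕ => Aa S (j+1) (x + k) := by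
    funext k
    have hk0 : (0:ℝ) ≤ k := Nat.cast_nonneg k
    exact Aa_abs hSsign (j+1) (by simp only [Set.mem_Ioi]; linarith)
  rw [h2] at h1
  exact h1.trans (Aa_tsum_le hS hSsign j hx)

lemma Tt_shift (j : ℕ) {x : ℝ} (hx : (0:ℝ) < x) :
    Tt S j x = S (j+1) x + Tt S j (x + 1) := by
  have h := Summable.tsum_eq_zero_add (S_summable hS hSsign j hx)
  simp only [Nat.cast_zero, add_zero] at h
  rw [Tt, h]
  congr 1
  have : (fun k : ℕ => S (j+1) (x + ((k+1:ℕ):ℝ))) = fun k : ℕ => S (j+1) (x + 1 + k) := by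
    funext k; congr 1; push_cast; ring
  rw [Tt, ← this]

lemma Tt_unif (j : ℕ) {a : ℝ} (ha : (0:ℝ) < a) :
    TendstoUniformlyOn (fun (K : ℕ) (x : ℝ) => ∑ k ∈ Finset.range K, S (j+1) (x + k))
      (Tt S j) atTop (Set.Ioi a) := by
  apply tendstoUniformlyOn_tsum_nat (Aa_summable hS hSsign j ha)
  intro k x hx
  have hk0 : (0:ℝ) ≤ k := Nat.cast_nonneg k
  have hxa : a < x := hx
  have h1 : ‖S (j+1) (x + k)‖ = Aa S (j+1) (x + k) :=
    Aa_abs hSsign (j+1) (by simp only [Set.mem_Ioi]; linarith)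
  rw [h1]
  exact Aa_anti hS hSsign (j+1) (by simp only [Set.mem_Ioi]; linarith)
    (by simp only [Set.mem_Ioi]; linarith) (by linarith)

lemma Tt_hasDeriv (j : ℕ) {x : ℝ} (hx : (0:ℝ) < x) :
    HasDerivAt (Tt S j) (Tt S (j+1) x) x := by
  have ha : (0:ℝ) < x/2 := by linarith
  refine hasDerivAt_of_tendstoUniformlyOn
    (f := fun (K : ℕ) (y : ℝ) => ∑ k ∈ Finset.range K, S (j+1) (y + k))
    (isOpen_Ioi (a := x/2)) (Tt_unif hS hSsign (j+1) ha) ?_ ?_ (Set.mem_Ioi.2 (by linarith))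
  · filter_upwards with K y hy
    apply HasDerivAt.fun_sum
    intro k _
    have hk0 : (0:ℝ) ≤ k := Nat.cast_nonneg k
    have hyk : (0:ℝ) < y + k := by have : x/2 < y := hy; linarith
    exact HasDerivAt.comp_add_const y k (hS (j+1) (y+k) hyk)
  · intro y hy
    have : x/2 < y := hy
    exact (S_summable hS hSsign j (by linarith)).hasSum.tendsto_sum_nat

variable (hSlim : ∀ j, Filter.Tendsto (S j) Filter.atTop (nhds 0))

include hSlim in
omit hS in
lemma Aa_lim (j : ℕ) : Filter.Tendsto (Aa S j) Filter.atTop (nhds 0) := by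
  have := (hSlim j).const_mul ((-1:ℝ)^j)
  rw [mul_zero] at this
  exact this

include hSlim in
lemma Tt_lim (j : ℕ) : Filter.Tendsto (Tt S j) Filter.atTop (nhds 0) := by
  have hb : Filter.Tendsto (fun x => Aa S (j+1) x + Aa S j x) Filter.atTop (nhds 0) := by
    simpa using (Aa_lim hSsign hSlim (j+1)).add (Aa_lim hSsign hSlim j)
  apply squeeze_zero_norm' _ hb
  filter_upwards [Filter.eventually_gt_atTop 0] with x hx
  rw [Real.norm_eq_abs]
  exact Tt_abs_le hS hSsign j hx


section Main
variable (U : ℕ → ℝ → ℝ) (V : ℝ → ℝ)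
variable (hU : ∀ j, ∀ x ∈ Set.Ioi (0:ℝ), HasDerivAt (U j) (U (j+1) x) x)
variable (hU0 : ∀ x ∈ Set.Ioi (0:ℝ), 0 ≤ U 0 x)
variable (hV : ∀ x ∈ Set.Ioi (0:ℝ), HasDerivAt V (U 0 x) x)
variable (hVd : ∀ x ∈ Set.Ioi (0:ℝ), V (x+1) = S 0 x + V x)
variable (hUd : ∀ j, ∀ x ∈ Set.Ioi (0:ℝ), U j (x+1) = S (j+1) x + U j x)

include hS hSsign hSlim hU hU0 hV hVd hUd in
theorem core_main :
    (∀ j, ∀ x ∈ Set.Ioi (0:ℝ), 0 ≤ (-1)^j * U j x) ∧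
      (∀ j, Filter.Tendsto (U j) Filter.atTop (nhds 0)) := by
  classical
  set c : ℝ → ℝ := fun x => U 0 x + Tt S 0 x with hc_def
  have natpos : ∀ (x : ℝ) (k : ℕ), 0 < x → (0:ℝ) < x + k := by
    intro x k hx; have : (0:ℝ) ≤ k := Nat.cast_nonneg k; linarith
  have hxN : ∀ x : ℝ, Filter.Tendsto (fun N : ℕ => x + (N:ℝ)) Filter.atTop Filter.atTop :=
    fun x => Filter.tendsto_atTop_add_const_left _ x tendsto_natCast_atTop_atTop
  -- periodicity of c
  have hcper : ∀ x ∈ Set.Ioi (0:ℝ), c (x+1) = c x := by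
    intro x hx
    have h1 := hUd 0 x hx
    have h2 := Tt_shift hS hSsign 0 hx
    simp only [hc_def]
    rw [h1, h2]; ring
  have hcperN : ∀ x ∈ Set.Ioi (0:ℝ), ∀ N : ℕ, c (x + N) = c x := by
    intro x hx N
    induction N with
    | zero => norm_num
    | succ N ih =>
      have hxN' : (0:ℝ) < x + N := natpos x N hx
      have : x + ((N+1:ℕ):ℝ) = (x + N) + 1 := by push_cast; ring
      rw [this, hcper _ hxN', ih]
  -- nonnegativity of c
  have hTtlimN : ∀ x : ℝ, Filter.Tendsto (fun N : ℕ => Tt S 0 (x + N)) Filter.atTop (nhds 0) :=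
    fun x => (Tt_lim hS hSsign hSlim 0).comp (hxN x)
  have hcnonneg : ∀ x ∈ Set.Ioi (0:ℝ), 0 ≤ c x := by
    intro x hx
    refine le_of_tendsto' (hTtlimN x) (fun N => ?_)
    have hpos := natpos x N hx
    have hceq : c x = U 0 (x + N) + Tt S 0 (x + N) := (hcperN x hx N).symm
    have hU0' := hU0 (x + N) hpos
    rw [hceq]; linarith
  -- continuity of c
  have hccont : ∀ x ∈ Set.Ioi (0:ℝ), ContinuousAt c x := by
    intro x hx
    exact ((hU 0 x hx).continuousAt).add (Tt_hasDeriv hS hSsign 0 hx).continuousAt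
  have hccontOn : ∀ y z : ℝ, 0 < y → ContinuousOn c (Set.Icc y z) := by
    intro y z hy
    intro t ht
    exact (hccont t (by simp only [Set.mem_Ioi]; have := ht.1; linarith)).continuousWithinAt
  have hcint : ∀ y z : ℝ, 0 < y → y ≤ z → IntervalIntegrable c MeasureTheory.volume y z := by
    intro y z hy hyz
    apply ContinuousOn.intervalIntegrable
    rw [Set.uIcc_of_le hyz]
    exact hccontOn y z hy
  -- the integral of c over a unit interval
  set J : ℝ → ℝ := fun x => ∫ t in x..(x+1), c t with hJ_def
  have hJshift : ∀ x ∈ Set.Ioi (0:ℝ), J (x + 1) = J x := by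
    intro x hx
    have hx0 : (0:ℝ) < x := hx
    have h1 : J (x+1) = ∫ t in x..(x+1), c (t+1) := by
      rw [hJ_def]
      rw [intervalIntegral.integral_comp_add_right (fun t => c t) 1]
    rw [h1]
    apply intervalIntegral.integral_congr
    intro t ht
    rw [Set.uIcc_of_le (by linarith : x ≤ x + 1)] at ht
    exact hcper t (by simp only [Set.mem_Ioi]; have := ht.1; linarith)
  have hJN : ∀ x ∈ Set.Ioi (0:ℝ), ∀ N : ℕ, J (x + N) = J x := by
    intro x hx N
    induction N with
    | zero => norm_num
    | succ N ih =>
      have hxN' : (0:ℝ) < x + N := natpos x N hx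
      have : x + ((N+1:ℕ):ℝ) = (x + N) + 1 := by push_cast; ring
      rw [this, hJshift _ hxN', ih]
  -- evaluate J at large arguments
  have hJbound : ∀ y ∈ Set.Ioi (0:ℝ),
      |J y| ≤ |S 0 y| + (Aa S 1 y + Aa S 0 y) := by
    intro y hy
    have hy0 : (0:ℝ) < y := hy
    have hUint : IntervalIntegrable (U 0) MeasureTheory.volume y (y+1) := by
      apply ContinuousOn.intervalIntegrable
      rw [Set.uIcc_of_le (by linarith)]
      intro t ht
      exact ((hU 0 t (by simp only [Set.mem_Ioi]; have := ht.1; linarith)).continuousAt).continuousWithinAt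
    have hTint : IntervalIntegrable (Tt S 0) MeasureTheory.volume y (y+1) := by
      apply ContinuousOn.intervalIntegrable
      rw [Set.uIcc_of_le (by linarith)]
      intro t ht
      exact (Tt_hasDeriv hS hSsign 0 (by simp only [Set.mem_Ioi]; have := ht.1; linarith : t ∈ Set.Ioi (0:ℝ))).continuousAt.continuousWithinAt
    have hsplit : J y = (∫ t in y..(y+1), U 0 t) + ∫ t in y..(y+1), Tt S 0 t := by
      rw [hJ_def]
      exact intervalIntegral.integral_add hUint hTint
    have hFTC : (∫ t in y..(y+1), U 0 t) = V (y+1) - V y := by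
      apply intervalIntegral.integral_eq_sub_of_hasDerivAt
      · intro t ht
        rw [Set.uIcc_of_le (by linarith : y ≤ y + 1)] at ht
        exact hV t (by simp only [Set.mem_Ioi]; have := ht.1; linarith)
      · exact hUint
    have hVS : V (y+1) - V y = S 0 y := by rw [hVd y hy]; ring
    have hTbound : |∫ t in y..(y+1), Tt S 0 t| ≤ (Aa S 1 y + Aa S 0 y) := by
      have := intervalIntegral.norm_integral_le_of_norm_le_const
        (C := Aa S 1 y + Aa S 0 y) (f := Tt S 0) (a := y) (b := y+1) ?_
      · simpa using this
      · intro t ht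
        rw [Set.uIoc_of_le (by linarith : y ≤ y + 1)] at ht
        have ht0 : (0:ℝ) < t := by have := ht.1; linarith
        have h1 : |Tt S 0 t| ≤ Aa S 1 t + Aa S 0 t := Tt_abs_le hS hSsign 0 ht0
        have h2 : Aa S 1 t ≤ Aa S 1 y := Aa_anti hS hSsign 1 hy
          (by simp only [Set.mem_Ioi]; linarith) (le_of_lt ht.1)
        have h3 : Aa S 0 t ≤ Aa S 0 y := Aa_anti hS hSsign 0 hy
          (by simp only [Set.mem_Ioi]; linarith) (le_of_lt ht.1)
        rw [Real.norm_eq_abs]; linarith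
    rw [hsplit, hFTC, hVS]
    calc |S 0 y + ∫ t in y..(y+1), Tt S 0 t| ≤ |S 0 y| + |∫ t in y..(y+1), Tt S 0 t| := abs_add_le _ _
      _ ≤ |S 0 y| + (Aa S 1 y + Aa S 0 y) := by linarith
  have hJzero : ∀ x ∈ Set.Ioi (0:ℝ), J x = 0 := by
    intro x hx
    have hb : Filter.Tendsto (fun N : ℕ => |S 0 (x+N)| + (Aa S 1 (x+N) + Aa S 0 (x+N)))
        Filter.atTop (nhds 0) := by
      have l1 : Filter.Tendsto (fun N : ℕ => |S 0 (x+N)|) Filter.atTop (nhds 0) := by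
        have := ((hSlim 0).comp (hxN x)).abs
        simpa using this
      have l2 := (Aa_lim hSsign hSlim 1).comp (hxN x)
      have l3 := (Aa_lim hSsign hSlim 0).comp (hxN x)
      have := (l1.add (l2.add l3))
      simpa using this
    have habs : |J x| ≤ 0 := by
      refine ge_of_tendsto' hb (fun N => ?_)
      have hpos := natpos x N hx
      have := hJbound (x + N) hpos
      rw [hJN x hx N] at this
      exact this
    have := abs_nonneg (J x)
    have : |J x| = 0 := le_antisymm habs this
    exact abs_eq_zero.mp this
  -- c vanishes identically
  have hczero : ∀ x ∈ Set.Ioi (0:ℝ), c x = 0 := by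
    intro x0 hx0
    by_contra hne
    have hcpos : 0 < c x0 := lt_of_le_of_ne (hcnonneg x0 hx0) (Ne.symm hne)
    set x1 : ℝ := x0 + 1 with hx1_def
    have hx1pos : (1:ℝ) < x1 := by simp only [hx1_def, Set.mem_Ioi] at hx0 ⊢; linarith
    have hcx1 : c x1 = c x0 := by
      have : x1 = x0 + ((1:ℕ):ℝ) := by norm_num [hx1_def]
      rw [this, hcperN x0 hx0 1]
    have hev : ∀ᶠ t in nhds x1, c x0 / 2 < c t := by
      have hca : ContinuousAt c x1 := hccont x1 (by simp only [Set.mem_Ioi]; linarith)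
      exact hca.eventually (eventually_gt_nhds (by rw [hcx1]; exact div_lt_self hcpos one_lt_two))
    obtain ⟨ε, hε, hball⟩ := Metric.eventually_nhds_iff.mp hev
    set δ : ℝ := min (ε/2) (1/2) with hδ_def
    have hδpos : 0 < δ := by positivity
    have hδhalf : δ ≤ 1/2 := min_le_right _ _
    have hδε : δ < ε := by
      have : δ ≤ ε/2 := min_le_left _ _
      linarith
    set y : ℝ := x1 - 1/2 with hy_def
    have hypos : (0:ℝ) < y := by simp only [hy_def]; linarith
    have hyineq : y ≤ x1 - δ ∧ x1 + δ ≤ y + 1 := by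
      constructor <;> simp only [hy_def] <;> linarith
    have hmidpos : 0 < ∫ t in (x1-δ)..(x1+δ), c t := by
      apply intervalIntegral.intervalIntegral_pos_of_pos_on
      · exact hcint _ _ (by linarith) (by linarith)
      · intro t ht
        apply lt_trans (half_pos hcpos)
        apply hball
        rw [Set.mem_Ioo] at ht
        obtain ⟨ht1, ht2⟩ := ht
        rw [Real.dist_eq, abs_lt]
        constructor
        · linarith
        · linarith
      · linarith
    have hside1 : 0 ≤ ∫ t in y..(x1-δ), c t := by
      apply intervalIntegral.integral_nonneg (by linarith [hyineq.1])
      intro t ht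
      exact hcnonneg t (by simp only [Set.mem_Ioi]; have := ht.1; linarith)
    have hside2 : 0 ≤ ∫ t in (x1+δ)..(y+1), c t := by
      apply intervalIntegral.integral_nonneg (by linarith [hyineq.2])
      intro t ht
      exact hcnonneg t (by simp only [Set.mem_Ioi]; have := ht.1; linarith)
    have hadd1 : (∫ t in y..(x1-δ), c t) + (∫ t in (x1-δ)..(x1+δ), c t)
        = ∫ t in y..(x1+δ), c t :=
      intervalIntegral.integral_add_adjacent_intervals
        (hcint _ _ hypos (by linarith [hyineq.1]))
        (hcint _ _ (by linarith) (by linarith))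
    have hadd2 : (∫ t in y..(x1+δ), c t) + (∫ t in (x1+δ)..(y+1), c t)
        = ∫ t in y..(y+1), c t :=
      intervalIntegral.integral_add_adjacent_intervals
        (hcint _ _ hypos (by linarith))
        (hcint _ _ (by linarith) (by linarith [hyineq.2]))
    have hJy : J y = 0 := hJzero y (by simp only [Set.mem_Ioi]; linarith)
    rw [hJ_def] at hJy
    simp only at hJy
    linarith [hadd1, hadd2, hmidpos, hside1, hside2, hJy]
  -- U j = - Tt S j
  have hUT : ∀ j, ∀ x ∈ Set.Ioi (0:ℝ), U j x = -Tt S j x := by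
    intro j
    induction j with
    | zero =>
      intro x hx
      have := hczero x hx
      simp only [hc_def] at this
      linarith
    | succ j ih =>
      intro x hx
      have h1 : U (j+1) x = deriv (U j) x := ((hU j x hx).deriv).symm
      have h2 : deriv (U j) x = deriv (fun y => -Tt S j y) x := by
        apply Filter.EventuallyEq.deriv_eq
        exact Filter.eventuallyEq_of_mem (isOpen_Ioi.mem_nhds hx) ih
      have h3 : deriv (fun y => -Tt S j y) x = -Tt S (j+1) x :=
        ((Tt_hasDeriv hS hSsign j hx).neg).deriv
      rw [h1, h2, h3]
  constructor
  · intro j x hx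
    rw [hUT j x hx]
    have : (-1:ℝ)^j * -Tt S j x = ∑' k : ℕ, Aa S (j+1) (x + k) := by
      have h1 : (-1:ℝ)^j * -Tt S j x = (-1:ℝ)^(j+1) * Tt S j x := by
        rw [pow_succ]; ring
      rw [h1, Tt, ← tsum_mul_left]
      rfl
    rw [this]
    apply tsum_nonneg
    intro k
    exact Aa_nonneg hSsign (j+1) _ (natpos x k hx)
  · intro j
    have hTn : Filter.Tendsto (fun x => -Tt S j x) Filter.atTop (nhds 0) := by
      simpa using (Tt_lim hS hSsign hSlim j).neg
    apply Filter.Tendsto.congr' _ hTn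
    filter_upwards [Filter.eventually_gt_atTop 0] with x hx
    exact (hUT j x hx).symm

end Main
end Core

lemma prod_neg_range (k : ℕ) : ∏ i ∈ Finset.range k, (-1 - (i:ℝ)) = (-1)^k * (Nat.factorial k) := by
  induction k with
  | zero => simp
  | succ k ih =>
    rw [Finset.prod_range_succ, ih, Nat.factorial_succ]
    push_cast; ring

lemma log_iterD (k : ℕ) :
    ∀ x : ℝ, iteratedDeriv (k+1) Real.log x = (-1)^k * (Nat.factorial k) * x ^ (-(k+1) : ℤ) := by
  intro x
  rw [iteratedDeriv_succ', Real.deriv_log', iteratedDeriv_eq_iterate]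
  rw [iter_deriv_inv k x, show (-1 - (k:ℤ)) = -((k:ℤ)+1) by ring]


lemma neg_one_sq_pow (k : ℕ) : ((-1:ℝ))^k * (-1)^k = 1 := by
  rw [← pow_add, show k + k = 2 * k by ring, pow_mul]
  norm_num

lemma log_base_sign (j : ℕ) : ∀ x ∈ Set.Ioi (0:ℝ), 0 ≤ (-1)^j * iteratedDeriv (j+1) Real.log x := by
  intro x hx
  have hx0 : (0:ℝ) < x := hx
  rw [log_iterD j x, ← mul_assoc, ← mul_assoc, neg_one_sq_pow j, one_mul]
  have h1 : (0:ℝ) < x ^ (-(j+1) : ℤ) := zpow_pos hx0 _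
  positivity

lemma log_base_lim (j : ℕ) : Filter.Tendsto (iteratedDeriv (j+1) Real.log) Filter.atTop (nhds 0) := by
  have h1 : Filter.Tendsto (fun x : ℝ => x ^ (-(j+1) : ℤ)) Filter.atTop (nhds 0) :=
    tendsto_zpow_atTop_zero (by omega)
  have h2 := h1.const_mul ((-1:ℝ)^j * (Nat.factorial j))
  rw [mul_zero] at h2
  apply h2.congr
  intro x
  rw [log_iterD j x, mul_assoc]

lemma deriv_nonneg_of_strictMonoOn {φ : ℝ → ℝ} {d x : ℝ} (hx : (0:ℝ) < x)
    (hd : HasDerivAt φ d x) (hm : StrictMonoOn φ (Set.Ioi 0)) : 0 ≤ d := by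
  have hslope := hasDerivAt_iff_tendsto_slope.1 hd
  have hmono : Filter.Tendsto (slope φ x) (nhdsWithin x (Set.Ioi x)) (nhds d) :=
    hslope.mono_left (nhdsWithin_mono x (fun t ht => Set.mem_compl_singleton_iff.2 (ne_of_gt ht)))
  refine ge_of_tendsto hmono ?_
  filter_upwards [self_mem_nhdsWithin] with t ht
  have hxt : x < t := ht
  have h1 : φ x < φ t := hm (Set.mem_Ioi.2 hx) (Set.mem_Ioi.2 (lt_trans hx hxt)) hxt
  have hst : slope φ x t = (φ t - φ x) / (t - x) := slope_def_field φ x t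
  rw [hst]
  apply div_nonneg <;> linarith
noncomputable def Fl (G : ℕ → ℝ → ℝ) (m : ℕ) : ℝ → ℝ := fun x => Real.log (G m x)


theorem mgs_main (G : ℕ → ℝ → ℝ) (hG : IsMultipleGammaSeq G) (m : ℕ) :
    (∀ j, ∀ x ∈ Set.Ioi (0:ℝ), 0 ≤ (-1)^j * iteratedDeriv (m+1+j) (Fl G m) x)
    ∧ (∀ j, Filter.Tendsto (iteratedDeriv (m+1+j) (Fl G m)) Filter.atTop (nhds 0)) := by
  obtain ⟨hpos, hsm, hG0, hrec, hone, hmono⟩ := hG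
  have hFsm : ∀ m, ContDiffOn ℝ ∞ (Fl G m) (Set.Ioi 0) := by
    intro m
    exact ContDiffOn.log ((hsm m).of_le (by simp)) (fun x hx => ne_of_gt (hpos m x hx))
  have hdelta : ∀ m, ∀ x ∈ Set.Ioi (0:ℝ), Fl G (m+1) (x+1) = Fl G m x + Fl G (m+1) x := by
    intro m x hx
    have hx0 : (0:ℝ) < x := hx
    simp only [Fl]
    rw [hrec m x hx, Real.log_mul (ne_of_gt (hpos m x hx)) (ne_of_gt (hpos (m+1) x hx))]
  induction m with
  | zero =>
    have heq : Set.EqOn (Fl G 0) Real.log (Set.Ioi 0) := fun y hy => by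
      simp only [Fl]; rw [hG0 y hy]
    constructor
    · intro j x hx
      have h1 : iteratedDeriv (0+1+j) (Fl G 0) x = iteratedDeriv (j+1) Real.log x := by
        rw [show 0+1+j = j+1 by omega]
        exact iterD_congr_open isOpen_Ioi heq (j+1) hx
      rw [h1]
      exact log_base_sign j x hx
    · intro j
      apply Filter.Tendsto.congr' _ (log_base_lim j)
      filter_upwards [Filter.eventually_gt_atTop (0:ℝ)] with x hx
      rw [show 0+1+j = j+1 by omega]
      exact (iterD_congr_open isOpen_Ioi heq (j+1) hx).symm
  | succ m ih =>
    -- instantiate the core machinery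
    have hSd : ∀ j, ∀ x ∈ Set.Ioi (0:ℝ),
        HasDerivAt (iteratedDeriv (m+1+j) (Fl G m)) (iteratedDeriv (m+1+(j+1)) (Fl G m) x) x :=
      fun j x hx => hasDerivAt_iterD isOpen_Ioi (hFsm m) (m+1+j) hx
    have hUd' : ∀ j, ∀ x ∈ Set.Ioi (0:ℝ),
        HasDerivAt (iteratedDeriv (m+2+j) (Fl G (m+1)))
          (iteratedDeriv (m+2+(j+1)) (Fl G (m+1)) x) x :=
      fun j x hx => hasDerivAt_iterD isOpen_Ioi (hFsm (m+1)) (m+2+j) hx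
    have hVd' : ∀ x ∈ Set.Ioi (0:ℝ),
        HasDerivAt (iteratedDeriv (m+1) (Fl G (m+1))) (iteratedDeriv (m+2) (Fl G (m+1)) x) x :=
      fun x hx => hasDerivAt_iterD isOpen_Ioi (hFsm (m+1)) (m+1) hx
    have hmono' : StrictMonoOn (iteratedDeriv (m+1) (Fl G (m+1))) (Set.Ioi 0) := by
      have h := hmono (m+1)
      intro a ha b hb hab
      have e1 := IDW_eq isOpen_Ioi ha (m+1) (f := Fl G (m+1))
      have e2 := IDW_eq isOpen_Ioi hb (m+1) (f := Fl G (m+1))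
      rw [← e1, ← e2]
      exact h ha hb hab
    have hU0 : ∀ x ∈ Set.Ioi (0:ℝ), 0 ≤ iteratedDeriv (m+2) (Fl G (m+1)) x := by
      intro x hx
      exact deriv_nonneg_of_strictMonoOn hx (hVd' x hx) hmono'
    have hdel : ∀ k, ∀ x ∈ Set.Ioi (0:ℝ), iteratedDeriv k (Fl G (m+1)) (x+1)
        = iteratedDeriv k (Fl G m) x + iteratedDeriv k (Fl G (m+1)) x :=
      fun k => iterD_delta (hFsm (m+1)) (hFsm m) (hdelta m) k
    have hcore := core_main (S := fun j => iteratedDeriv (m+1+j) (Fl G m))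
      (U := fun j => iteratedDeriv (m+2+j) (Fl G (m+1)))
      (V := iteratedDeriv (m+1) (Fl G (m+1)))
      hSd ih.1 ih.2 hUd' hU0 hVd'
      (by
        intro x hx
        have := hdel (m+1) x hx
        simpa using this)
      (by
        intro j x hx
        show iteratedDeriv (m+2+j) (Fl G (m+1)) (x+1)
          = iteratedDeriv (m+1+(j+1)) (Fl G m) x + iteratedDeriv (m+2+j) (Fl G (m+1)) x
        rw [show m+1+(j+1) = m+2+j by omega]
        exact hdel (m+2+j) x hx)
    constructor
    · intro j x hx
      have := hcore.1 j x hx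
      rw [show m+1+1+j = m+2+j by omega]
      exact this
    · intro j
      have := hcore.2 j
      rw [show m+1+1+j = m+2+j by omega]
      exact this
lemma contDiff_polyeval (P : Polynomial ℝ) : ContDiff ℝ (⊤:ℕ∞) (fun x : ℝ => Polynomial.eval x P) := by
  induction P using Polynomial.induction_on with
  | C a => simpa using contDiff_const
  | add p q hp hq => simpa [Polynomial.eval_add] using hp.add hq
  | monomial n a h => simpa [pow_succ, ← mul_assoc] using h.mul contDiff_id

lemma divDiff_perm (f : ℝ → ℝ) {n : ℕ} (x : Fin n → ℝ) (σ : Equiv.Perm (Fin n)) :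
    divDiff f (x ∘ σ) = divDiff f x := by
  unfold divDiff
  apply Fintype.sum_equiv σ
  intro i
  simp only [Function.comp_apply]
  congr 1
  apply Finset.prod_bij (i := fun j _ => σ j)
  · intro j hj
    simp only [Finset.mem_erase, Finset.mem_univ, and_true] at hj ⊢
    exact fun h => hj (σ.injective h)
  · intro a ha b hb hab
    exact σ.injective hab
  · intro j' hj'
    simp only [Finset.mem_erase, Finset.mem_univ, and_true] at hj'
    refine ⟨σ.symm j', ?_, by simp⟩
    simp only [Finset.mem_erase, Finset.mem_univ, and_true]
    intro h
    apply hj'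
    rw [← h]; simp
  · intro j hj
    rfl

lemma iter_rolle : ∀ (n : ℕ) (g : ℝ → ℝ), ContDiffOn ℝ ∞ g (Set.Ioi 0) →
    ∀ y : Fin (n+1) → ℝ, StrictMono y → (∀ i, y i ∈ Set.Ioi (0:ℝ)) → (∀ i, g (y i) = 0) →
    ∃ ξ ∈ Set.Ioi (0:ℝ), iteratedDeriv n g ξ = 0 := by
  intro n
  induction n with
  | zero =>
    intro g hg y hy hypos hz
    exact ⟨y 0, hypos 0, by simpa [iteratedDeriv_zero] using hz 0⟩
  | succ n IH =>
    intro g hg y hy hypos hz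
    have key : ∀ i : Fin (n+1), ∃ zz, zz ∈ Set.Ioo (y i.castSucc) (y i.succ) ∧ deriv g zz = 0 := by
      intro i
      have hab : y i.castSucc < y i.succ := hy i.castSucc_lt_succ
      have hcont : ContinuousOn g (Set.Icc (y i.castSucc) (y i.succ)) := by
        apply hg.continuousOn.mono
        intro t ht
        have h0 : (0:ℝ) < y i.castSucc := hypos i.castSucc
        exact Set.mem_Ioi.2 (lt_of_lt_of_le h0 ht.1)
      obtain ⟨zz, hz1, hz2⟩ := exists_deriv_eq_zero hab hcont (by rw [hz _, hz _])
      exact ⟨zz, hz1, hz2⟩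
    choose z hz1 hz2 using key
    have hzmono : StrictMono z := by
      rw [Fin.strictMono_iff_lt_succ]
      intro i
      have h1 := (hz1 i.castSucc).2
      have h2 := (hz1 i.succ).1
      rw [Fin.succ_castSucc] at h1
      exact lt_trans h1 h2
    have hzpos : ∀ i, z i ∈ Set.Ioi (0:ℝ) := by
      intro i
      have := (hz1 i).1
      have h0 : (0:ℝ) < y i.castSucc := hypos i.castSucc
      exact Set.mem_Ioi.2 (lt_trans h0 this)
    have hdg : ContDiffOn ℝ ∞ (deriv g) (Set.Ioi 0) := by
      have := contDiffOn_iterD isOpen_Ioi hg 1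
      rwa [iteratedDeriv_one] at this
    obtain ⟨ξ, hξ, h0⟩ := IH (deriv g) hdg z hzmono hzpos hz2
    exact ⟨ξ, hξ, by rw [iteratedDeriv_succ']; exact h0⟩

lemma iterD_polyeval (P : Polynomial ℝ) (k : ℕ) :
    iteratedDeriv k (fun t : ℝ => Polynomial.eval t P)
      = fun t : ℝ => Polynomial.eval t (Polynomial.derivative^[k] P) := by
  induction k with
  | zero => simp [iteratedDeriv_zero]
  | succ k ih =>
    rw [iteratedDeriv_succ, ih]
    funext t
    rw [Function.iterate_succ_apply']
    exact Polynomial.deriv (𝕜 := ℝ) _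

lemma convexOrder_of_iterD_nonneg (f : ℝ → ℝ) (hf : ContDiffOn ℝ ∞ f (Set.Ioi 0)) (p : ℕ)
    (hpos : ∀ x ∈ Set.Ioi (0:ℝ), 0 ≤ iteratedDeriv (p+1) f x) :
    ConvexOrderOn f p (Set.Ioi 0) := by
  intro x hxS hxinj
  classical
  set σ := Tuple.sort x with hσ
  set x' : Fin (p+2) → ℝ := x ∘ σ with hx'
  have hmono : Monotone x' := Tuple.monotone_sort x
  have hinj : Function.Injective x' := hxinj.comp σ.injective
  have hsm : StrictMono x' := hmono.strictMono_of_injective hinj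
  have hposx' : ∀ i, x' i ∈ Set.Ioi (0:ℝ) := fun i => hxS (σ i)
  rw [← divDiff_perm f x σ]
  -- the Lagrange interpolation polynomial
  set P : Polynomial ℝ := ∑ i, Polynomial.C (f (x' i) / ∏ j ∈ Finset.univ.erase i, (x' i - x' j))
      * ∏ j ∈ Finset.univ.erase i, (Polynomial.X - Polynomial.C (x' j)) with hP
  have hQmonic : ∀ i : Fin (p+2),
      (∏ j ∈ Finset.univ.erase i, (Polynomial.X - Polynomial.C (x' j))).Monic :=
    fun i => Polynomial.monic_prod_of_monic _ _ (fun j _ => Polynomial.monic_X_sub_C (x' j))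
  have hQdeg : ∀ i : Fin (p+2),
      (∏ j ∈ Finset.univ.erase i, (Polynomial.X - Polynomial.C (x' j))).natDegree = p+1 := by
    intro i
    rw [Polynomial.natDegree_prod _ _ (fun j _ => Polynomial.X_sub_C_ne_zero (x' j))]
    simp [Polynomial.natDegree_X_sub_C, Finset.card_erase_of_mem]
  -- coefficient p+1 of P is the divided difference
  have hcoeff : P.coeff (p+1) = divDiff f x' := by
    rw [hP, Polynomial.finset_sum_coeff]
    unfold divDiff
    apply Finset.sum_congr rfl
    intro i _
    rw [Polynomial.coeff_C_mul]
    have : (∏ j ∈ Finset.univ.erase i, (Polynomial.X - Polynomial.C (x' j))).coeff (p+1) = 1 := by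
      have h1 := (hQmonic i).coeff_natDegree
      rwa [hQdeg i] at h1
    rw [this, mul_one]
  have hPdeg : P.natDegree ≤ p+1 := by
    rw [hP]
    apply Polynomial.natDegree_sum_le_of_forall_le
    intro i _
    exact (Polynomial.natDegree_C_mul_le _ _).trans (le_of_eq (hQdeg i))
  -- (p+1)-st iterated derivative of P is constant
  have hPder : Polynomial.derivative^[p+1] P = Polynomial.C (((p+1).factorial : ℝ) * divDiff f x') := by
    have hd0 : (Polynomial.derivative^[p+1] P).natDegree ≤ 0 := by
      have := Polynomial.natDegree_iterate_derivative P (p+1)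
      omega
    rw [Polynomial.eq_C_of_natDegree_le_zero hd0]
    congr 1
    rw [Polynomial.coeff_iterate_derivative]
    rw [zero_add, Nat.descFactorial_self, hcoeff]
    rw [nsmul_eq_mul]
  -- P interpolates f at the nodes
  have hinterp : ∀ i, Polynomial.eval (x' i) P = f (x' i) := by
    intro i
    rw [hP, Polynomial.eval_finset_sum]
    rw [Finset.sum_eq_single i]
    · rw [Polynomial.eval_mul, Polynomial.eval_C, Polynomial.eval_prod]
      have hD : (∏ j ∈ Finset.univ.erase i, (x' i - x' j)) ≠ 0 := by
        apply Finset.prod_ne_zero_iff.2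
        intro j hj
        have : j ≠ i := (Finset.mem_erase.1 hj).1
        exact sub_ne_zero_of_ne (fun h => this (hinj h.symm))
      have : (∏ j ∈ Finset.univ.erase i, Polynomial.eval (x' i) (Polynomial.X - Polynomial.C (x' j)))
          = ∏ j ∈ Finset.univ.erase i, (x' i - x' j) := by
        apply Finset.prod_congr rfl
        intro j _
        simp
      rw [this, div_mul_cancel₀ _ hD]
    · intro k _ hk
      rw [Polynomial.eval_mul, Polynomial.eval_prod]
      have hz : (∏ j ∈ Finset.univ.erase k,
          Polynomial.eval (x' i) (Polynomial.X - Polynomial.C (x' j))) = 0 := by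
        apply Finset.prod_eq_zero (Finset.mem_erase.2 ⟨Ne.symm hk, Finset.mem_univ i⟩)
        simp
      rw [hz, mul_zero]
    · intro h
      exact absurd (Finset.mem_univ i) h
  -- apply Rolle to f - P
  set g : ℝ → ℝ := fun t => f t + Polynomial.eval t (-P) with hg_def
  have hgsm : ContDiffOn ℝ ∞ g (Set.Ioi 0) := by
    apply hf.add
    exact (contDiff_polyeval (-P)).contDiffOn
  have hgzero : ∀ i, g (x' i) = 0 := by
    intro i
    simp only [hg_def, Polynomial.eval_neg, hinterp i]
    ring
  obtain ⟨ξ, hξ, hξ0⟩ := iter_rolle (p+1) g hgsm x' hsm hposx' hgzero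
  have hsplit : iteratedDeriv (p+1) g ξ
      = iteratedDeriv (p+1) f ξ + iteratedDeriv (p+1) (fun t => Polynomial.eval t (-P)) ξ :=
    iterD_add_on isOpen_Ioi hf (contDiff_polyeval (-P)).contDiffOn (p+1) hξ
  have hconst : iteratedDeriv (p+1) (fun t => Polynomial.eval t (-P)) ξ
      = -(((p+1).factorial : ℝ) * divDiff f x') := by
    rw [iterD_polyeval (-P) (p+1)]
    have : Polynomial.derivative^[p+1] (-P) = -(Polynomial.derivative^[p+1] P) := by
      induction (p+1) with
      | zero => simp
      | succ k ihk => rw [Function.iterate_succ_apply', Function.iterate_succ_apply', ihk]; simp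
    rw [this, hPder]
    simp
  have hkey : 0 = iteratedDeriv (p+1) f ξ - ((p+1).factorial : ℝ) * divDiff f x' := by
    rw [← hξ0, hsplit, hconst]; ring
  have hfpos := hpos ξ hξ
  have hfact : (0:ℝ) < ((p+1).factorial : ℝ) := by positivity
  nlinarith [hkey, hfpos, hfact]
lemma fdiff_iter_congrOn : ∀ (k : ℕ) {f g : ℝ → ℝ}, Set.EqOn f g (Set.Ioi 0) →
    Set.EqOn (fdiff^[k] f) (fdiff^[k] g) (Set.Ioi 0) := by
  intro k
  induction k with
  | zero => intro f g h; simpa using h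
  | succ k ih =>
    intro f g h
    rw [Function.iterate_succ_apply, Function.iterate_succ_apply]
    apply ih
    intro y hy
    have hy0 : (0:ℝ) < y := hy
    have h1 : y + 1 ∈ Set.Ioi (0:ℝ) := Set.mem_Ioi.2 (by linarith)
    simp only [fdiff]
    rw [h hy, h h1]

lemma mgs_DD (G : ℕ → ℝ → ℝ) (hG : IsMultipleGammaSeq G) (m : ℕ) :
    DD (m + 1) (fun x => Real.log (G m x)) := by
  obtain ⟨hpos, hsm, hG0, hrec, hone, hmono⟩ := hG
  have hdelta : ∀ m, ∀ x ∈ Set.Ioi (0:ℝ), Fl G (m+1) (x+1) = Fl G m x + Fl G (m+1) x := by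
    intro m x hx
    simp only [Fl]
    rw [hrec m x hx, Real.log_mul (ne_of_gt (hpos m x hx)) (ne_of_gt (hpos (m+1) x hx))]
  have hkey : ∀ m, Set.EqOn (fdiff^[m+1] (Fl G m)) (fdiff (Fl G 0)) (Set.Ioi 0) := by
    intro m
    induction m with
    | zero => intro y hy; rfl
    | succ m ih =>
      intro y hy
      rw [Function.iterate_succ_apply]
      have hstep : Set.EqOn (fdiff (Fl G (m+1))) (Fl G m) (Set.Ioi 0) := by
        intro t ht
        have := hdelta m t ht
        simp only [fdiff]
        rw [this]; ring
      have h1 := fdiff_iter_congrOn (m+1) hstep hy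
      rw [h1]
      exact ih hy
  have hlim : Filter.Tendsto (fun n : ℕ => Real.log ((n:ℝ)+1) - Real.log n)
      Filter.atTop (nhds 0) := by
    have l0 : Filter.Tendsto (fun n : ℕ => 1 + 1/(n:ℝ)) Filter.atTop (nhds 1) := by
      have := tendsto_one_div_atTop_nhds_zero_nat.const_add (1:ℝ)
      simpa using this
    have l1 : Filter.Tendsto (fun n : ℕ => ((n:ℝ)+1)/n) Filter.atTop (nhds 1) := by
      apply l0.congr'
      filter_upwards [Filter.eventually_ge_atTop 1] with n hn
      have hn0 : (n:ℝ) ≠ 0 := by positivity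
      field_simp
    have l2 := ((Real.continuousAt_log (by norm_num : (1:ℝ) ≠ 0)).tendsto).comp l1
    rw [Real.log_one] at l2
    apply l2.congr'
    filter_upwards [Filter.eventually_ge_atTop 1] with n hn
    have hn0 : (0:ℝ) < n := by exact_mod_cast hn
    simp only [Function.comp_apply]
    rw [Real.log_div (by linarith) (by linarith)]
  unfold DD
  show Filter.Tendsto (fun n : ℕ => (fdiff^[m+1] (Fl G m)) n) Filter.atTop (nhds 0)
  apply Filter.Tendsto.congr' _ hlim
  filter_upwards [Filter.eventually_ge_atTop 1] with n hn
  have hn0 : (0:ℝ) < n := by exact_mod_cast hn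
  have h1 := hkey m (Set.mem_Ioi.2 hn0)
  rw [h1]
  have hG0n : G 0 ((n:ℝ)+1) = (n:ℝ)+1 := hG0 _ (by linarith)
  have hG0n' : G 0 (n:ℝ) = (n:ℝ) := hG0 _ hn0
  simp only [fdiff, Fl, hG0n, hG0n']

theorem stmt_11' (G : ℕ → ℝ → ℝ) (hG : IsMultipleGammaSeq G) (m n : ℕ) :
    DD (m + 1) (fun x => Real.log (G m x)) ∧
    (Even n → ConvexOrderOn (fun x => Real.log (G m x)) (m + n) (Set.Ioi 0)) ∧
    (Odd n → ConvexOrderOn (fun x => -Real.log (G m x)) (m + n) (Set.Ioi 0)) := by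
  have hFsm : ContDiffOn ℝ ∞ (Fl G m) (Set.Ioi 0) :=
    ContDiffOn.log ((hG.2.1 m).of_le (by simp)) (fun x hx => ne_of_gt (hG.1 m x hx))
  have hmain := mgs_main G hG m
  refine ⟨mgs_DD G hG m, ?_, ?_⟩
  · intro hn
    have hsign : ∀ x ∈ Set.Ioi (0:ℝ), 0 ≤ iteratedDeriv (m+n+1) (Fl G m) x := by
      intro x hx
      have := hmain.1 n x hx
      rw [hn.neg_one_pow, one_mul] at this
      rw [show m+n+1 = m+1+n by omega]
      exact this
    exact convexOrder_of_iterD_nonneg (Fl G m) hFsm (m+n) hsign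
  · intro hn
    have hsign : ∀ x ∈ Set.Ioi (0:ℝ),
        0 ≤ iteratedDeriv (m+n+1) (fun x => -Real.log (G m x)) x := by
      intro x hx
      have h1 := hmain.1 n x hx
      rw [hn.neg_one_pow, neg_one_mul] at h1
      have h2 : iteratedDeriv (m+n+1) (fun x => -Real.log (G m x)) x
          = -(iteratedDeriv (m+n+1) (Fl G m) x) :=
        iteratedDeriv_neg (m+n+1) (Fl G m) x
      rw [h2, show m+n+1 = m+1+n by omega]
      exact h1
    exact convexOrder_of_iterD_nonneg _ hFsm.neg (m+n) hsign

/-- `ln ∘ G m ∈ D^{m+1}` and `ln ∘ G m` is `(m+n)`-convex on `(0,∞)` for even `n`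
and `(m+n)`-concave on `(0,∞)` for odd `n`. -/
theorem stmt_11 (G : ℕ → ℝ → ℝ) (hG : IsMultipleGammaSeq G) (m n : ℕ) :
    DD (m + 1) (fun x => Real.log (G m x)) ∧
    (Even n → ConvexOrderOn (fun x => Real.log (G m x)) (m + n) (Set.Ioi 0)) ∧
    (Odd n → ConvexOrderOn (fun x => -Real.log (G m x)) (m + n) (Set.Ioi 0)) := by
  exact stmt_11' G hG m n
end

section
/- Let m ∈ ℕ and t > 0, and define F : (0,∞) → ℝ by F(x) = C(x−1, m+1) − (e^{(1−x)t} − 1)/(e^{−t} − 1)^{m+1} + Σ_{j=1}^{m} C(x−1, j)/(e^{−t} − 1)^{m+1−j}. Then Δ^{m+1} F(x) = 1 − e^{(1−x)t} for all x > 0, and F(k) = 0 for k = 1,…,m+1. -/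
open Finset Filter

lemma gbinom_pascal (x : ℝ) (j : ℕ) :
    gbinom (x + 1) (j + 1) = gbinom x (j + 1) + gbinom x j := by
  unfold gbinom
  have h1 : ∏ i ∈ range (j + 1), (x + 1 - (i : ℝ)) = (x + 1) * ∏ i ∈ range j, (x - i) := by
    rw [Finset.prod_range_succ', Nat.cast_zero, sub_zero, mul_comm]
    congr 1
    refine Finset.prod_congr rfl fun i _ => ?_
    push_cast; ring
  have h2 : ∏ i ∈ range (j + 1), (x - (i : ℝ)) = (∏ i ∈ range j, (x - i)) * (x - j) := by
    rw [Finset.prod_range_succ]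
  rw [h1, h2]
  have hj : (Nat.factorial (j+1) : ℝ) = (j+1) * Nat.factorial j := by
    push_cast [Nat.factorial_succ]; ring
  have hf : (Nat.factorial j : ℝ) ≠ 0 := by positivity
  have hf1 : (Nat.factorial (j+1) : ℝ) ≠ 0 := by positivity
  field_simp
  rw [hj]
  ring

lemma gbinom_zero (x : ℝ) : gbinom x 0 = 1 := by simp [gbinom]

lemma gbinom_nat_of_lt (n j : ℕ) (h : n < j) : gbinom (n : ℝ) j = 0 := by
  unfold gbinom
  rw [Finset.prod_eq_zero (Finset.mem_range.2 h) (by simp)]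
  simp

lemma gbinom_nat (n j : ℕ) (h : j ≤ n) : gbinom (n : ℝ) j = n.choose j := by
  unfold gbinom
  have : ∏ i ∈ range j, ((n : ℝ) - i) = (n.descFactorial j : ℝ) := by
    rw [Nat.descFactorial_eq_prod_range]
    push_cast
    apply Finset.prod_congr rfl
    intro i hi
    have : i ≤ n := le_trans (Nat.le_of_lt_succ (Nat.lt_succ_of_lt (Finset.mem_range.1 hi))) h
    rw [Nat.cast_sub this]
  rw [this, Nat.descFactorial_eq_factorial_mul_choose]
  push_cast
  rw [mul_comm, mul_div_assoc, div_self (by positivity), mul_one]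

noncomputable def Phi (t : ℝ) (m : ℕ) (x : ℝ) : ℝ :=
  gbinom (x - 1) (m + 1) -
    (Real.exp ((1 - x) * t) - 1) / (Real.exp (-t) - 1) ^ (m + 1) +
    ∑ j ∈ Finset.Icc 1 m, gbinom (x - 1) j / (Real.exp (-t) - 1) ^ (m + 1 - j)

lemma d_neg {t : ℝ} (ht : 0 < t) : Real.exp (-t) - 1 < 0 := by
  have : Real.exp (-t) < 1 := by
    rw [Real.exp_lt_one_iff]; linarith
  linarith

lemma d_ne {t : ℝ} (ht : 0 < t) : Real.exp (-t) - 1 ≠ 0 := ne_of_lt (d_neg ht)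

lemma exp_shift (t x : ℝ) :
    Real.exp ((1 - (x + 1)) * t) - Real.exp ((1 - x) * t)
      = Real.exp ((1 - x) * t) * (Real.exp (-t) - 1) := by
  rw [mul_sub, ← Real.exp_add]
  ring_nf

lemma fdiff_Phi_zero {t : ℝ} (ht : 0 < t) (x : ℝ) :
    fdiff (Phi t 0) x = 1 - Real.exp ((1 - x) * t) := by
  unfold fdiff Phi
  simp only [Finset.Icc_self, zero_add, pow_one]
  rw [Finset.Icc_eq_empty (by norm_num)]
  simp only [Finset.sum_empty, add_zero]
  have hg : ∀ y : ℝ, gbinom y 1 = y := by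
    intro y; simp [gbinom]
  rw [hg, hg]
  have hd := d_ne ht
  have he := exp_shift t x
  have key : x + 1 - 1 - (Real.exp ((1 - (x + 1)) * t) - 1) / (Real.exp (-t) - 1)
      - (x - 1 - (Real.exp ((1 - x) * t) - 1) / (Real.exp (-t) - 1))
      = 1 - (Real.exp ((1 - (x + 1)) * t) - Real.exp ((1 - x) * t)) / (Real.exp (-t) - 1) := by
    ring
  rw [key, he, mul_div_assoc, div_self hd, mul_one]

lemma sum_shift (f : ℕ → ℝ) (n : ℕ) :
    ∑ j ∈ Finset.Icc 1 n, f j = ∑ j ∈ Finset.range n, f (j + 1) := by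
  rw [← Finset.Ico_add_one_right_eq_Icc, Finset.sum_Ico_eq_sum_range]
  simp [add_comm]

lemma fdiff_Phi_succ {t : ℝ} (ht : 0 < t) (m : ℕ) (x : ℝ) :
    fdiff (Phi t (m + 1)) x = Phi t m x := by
  unfold fdiff Phi
  have hd : Real.exp (-t) - 1 ≠ 0 := d_ne ht
  set d := Real.exp (-t) - 1 with hdd
  have hP : ∀ j, gbinom (x + 1 - 1) (j + 1) - gbinom (x - 1) (j + 1) = gbinom (x - 1) j := by
    intro j
    rw [show x + 1 - 1 = x - 1 + 1 by ring, gbinom_pascal]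
    ring
  have hsum : (∑ j ∈ Finset.Icc 1 (m + 1), gbinom (x + 1 - 1) j / d ^ (m + 1 + 1 - j))
      - (∑ j ∈ Finset.Icc 1 (m + 1), gbinom (x - 1) j / d ^ (m + 1 + 1 - j))
      = 1 / d ^ (m + 1) + ∑ j ∈ Finset.Icc 1 m, gbinom (x - 1) j / d ^ (m + 1 - j) := by
    rw [← Finset.sum_sub_distrib,
      sum_shift (fun j => gbinom (x + 1 - 1) j / d ^ (m + 1 + 1 - j)
        - gbinom (x - 1) j / d ^ (m + 1 + 1 - j)) (m + 1),
      sum_shift (fun j => gbinom (x - 1) j / d ^ (m + 1 - j)) m]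
    have step : ∀ j ∈ Finset.range (m + 1),
        gbinom (x + 1 - 1) (j + 1) / d ^ (m + 1 + 1 - (j + 1))
          - gbinom (x - 1) (j + 1) / d ^ (m + 1 + 1 - (j + 1))
        = gbinom (x - 1) j / d ^ (m + 1 - j) := by
      intro j _
      rw [show m + 1 + 1 - (j + 1) = m + 1 - j by omega, ← sub_div, hP]
    rw [Finset.sum_congr rfl step, Finset.sum_range_succ']
    have : ∀ j ∈ Finset.range m,
        gbinom (x - 1) (j + 1) / d ^ (m + 1 - (j + 1)) = gbinom (x - 1) (j + 1) / d ^ (m - j) := by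
      intro j _
      rw [show m + 1 - (j + 1) = m - j by omega]
    rw [Finset.sum_congr rfl this]
    simp [gbinom_zero]
    ring
  have hexp : Real.exp ((1 - (x + 1)) * t) - Real.exp ((1 - x) * t)
      = Real.exp ((1 - x) * t) * d := exp_shift t x
  have h1 := hP (m + 1)
  have hpne : d ^ (m + 1) ≠ 0 := pow_ne_zero _ hd
  have hE : (Real.exp ((1 - (x + 1)) * t) - 1) / d ^ (m + 1 + 1)
      - (Real.exp ((1 - x) * t) - 1) / d ^ (m + 1 + 1)
      = Real.exp ((1 - x) * t) / d ^ (m + 1) := by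
    rw [div_sub_div_same,
      show Real.exp ((1 - (x + 1)) * t) - 1 - (Real.exp ((1 - x) * t) - 1)
        = Real.exp ((1 - (x + 1)) * t) - Real.exp ((1 - x) * t) by ring,
      hexp, pow_succ, mul_div_mul_right _ _ hd]
  linear_combination h1 + hsum - hE

lemma iter_Phi {t : ℝ} (ht : 0 < t) (m : ℕ) (x : ℝ) :
    fdiff^[m + 1] (Phi t m) x = 1 - Real.exp ((1 - x) * t) := by
  induction m generalizing x with
  | zero => simpa using fdiff_Phi_zero ht x
  | succ m ih =>
    rw [Function.iterate_succ_apply, show fdiff (Phi t (m + 1)) = Phi t m from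
      funext (fdiff_Phi_succ ht m)]
    exact ih x

lemma Phi_nat_zero {t : ℝ} (ht : 0 < t) (m n : ℕ) (hn : n ≤ m) :
    Phi t m ((n : ℝ) + 1) = 0 := by
  have hd : Real.exp (-t) - 1 ≠ 0 := d_ne ht
  unfold Phi
  set d := Real.exp (-t) - 1 with hdd
  have hx : ((n : ℝ) + 1) - 1 = n := by ring
  rw [hx, gbinom_nat_of_lt n (m + 1) (by omega)]
  have hE : Real.exp ((1 - ((n : ℝ) + 1)) * t) = (d + 1) ^ n := by
    rw [show (1 - ((n : ℝ) + 1)) * t = n * (-t) by push_cast; ring, Real.exp_nat_mul,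
      show d + 1 = Real.exp (-t) by rw [hdd]; ring]
  have key : Real.exp ((1 - ((n : ℝ) + 1)) * t) - 1
      = ∑ j ∈ Finset.range n, d ^ (j + 1) * (n.choose (j + 1) : ℝ) := by
    rw [hE, add_pow, Finset.sum_range_succ']
    simp
  have hdiv : (∑ j ∈ Finset.range n, d ^ (j + 1) * (n.choose (j + 1) : ℝ)) / d ^ (m + 1)
      = ∑ j ∈ Finset.range n, (n.choose (j + 1) : ℝ) / d ^ (m - j) := by
    rw [Finset.sum_div]
    refine Finset.sum_congr rfl fun j hj => ?_
    have hj' : j < n := Finset.mem_range.1 hj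
    rw [show d ^ (m + 1) = d ^ (j + 1) * d ^ (m - j) by
        rw [← pow_add]; congr 1; omega,
      mul_div_mul_left _ _ (pow_ne_zero _ hd)]
  have hS : ∑ j ∈ Finset.Icc 1 m, gbinom (n : ℝ) j / d ^ (m + 1 - j)
      = ∑ j ∈ Finset.range n, (n.choose (j + 1) : ℝ) / d ^ (m - j) := by
    rw [sum_shift (fun j => gbinom (n : ℝ) j / d ^ (m + 1 - j)) m,
      Finset.sum_congr rfl (fun j (_ : j ∈ Finset.range m) =>
        show gbinom (n : ℝ) (j + 1) / d ^ (m + 1 - (j + 1)) = gbinom (n : ℝ) (j + 1) / d ^ (m - j)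
        by rw [show m + 1 - (j + 1) = m - j by omega])]
    symm
    rw [Finset.sum_congr rfl (fun j (hj : j ∈ Finset.range n) =>
      show (n.choose (j + 1) : ℝ) / d ^ (m - j) = gbinom (n : ℝ) (j + 1) / d ^ (m - j)
      by rw [gbinom_nat n (j + 1) (Finset.mem_range.1 hj)])]
    exact Finset.sum_subset (Finset.range_subset_range.2 hn) (fun j _ hj => by
      rw [gbinom_nat_of_lt n (j + 1) (by simp at hj; omega), zero_div])
  rw [key, hdiv, hS]
  ring


/-- The function `F` is an `(m+1)`-fold indefinite sum of `x ↦ 1 - e^{(1-x)t}`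
vanishing at `1, …, m+1`. -/
theorem stmt_13 (m : ℕ) (t : ℝ) (ht : 0 < t) (F : ℝ → ℝ)
    (hF : ∀ x : ℝ, F x = gbinom (x - 1) (m + 1) -
        (Real.exp ((1 - x) * t) - 1) / (Real.exp (-t) - 1) ^ (m + 1) +
        ∑ j ∈ Finset.Icc 1 m, gbinom (x - 1) j / (Real.exp (-t) - 1) ^ (m + 1 - j)) :
    (∀ x > (0 : ℝ), fdiff^[m + 1] F x = 1 - Real.exp ((1 - x) * t)) ∧
    (∀ k ∈ Finset.Icc 1 (m + 1), F k = 0) := by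
  have hFP : F = Phi t m := funext fun x => by rw [hF x]; rfl
  subst hFP
  constructor
  · exact fun x _ => iter_Phi ht m x
  · intro k hk
    simp only [Finset.mem_Icc] at hk
    obtain ⟨h1, h2⟩ := hk
    obtain ⟨n, rfl⟩ := Nat.exists_eq_add_of_le h1
    have := Phi_nat_zero ht m n (by omega)
    rw [show ((1 + n : ℕ) : ℝ) = (n : ℝ) + 1 by push_cast; ring]
    exact this
end

section
/- For every k ∈ ℕ, the function f_k : (0,∞) → ℝ defined by f_k(x) = C(x−1, k)·(ψ(x) − ψ(k+1)) is k-convex on (0,∞), where ψ denotes the digamma function ψ(x) = Γ'(x)/Γ(x). -/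
open Finset Filter

section AuxProof
open Finset Filter Real Set Polynomial


/-- Partial fraction decomposition of `1 / ∏ (x - y)`. -/
lemma pf_lemma (s : Finset ℝ) :
    s.Nonempty → ∀ x : ℝ, x ∉ s →
      ∑ y ∈ s, 1 / ((x - y) * ∏ z ∈ s.erase y, (y - z)) = 1 / ∏ y ∈ s, (x - y) := by
  induction s using Finset.induction_on with
  | empty => rintro ⟨y, hy⟩; simp at hy
  | @insert a t ha ih =>
    rcases t.eq_empty_or_nonempty with rfl | ht
    · intro _ x hx; simp
    intro _ x hx
    have hxa : x ≠ a := fun h => hx (h ▸ Finset.mem_insert_self a t)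
    have hxt : x ∉ t := fun h => hx (Finset.mem_insert_of_mem h)
    have key : ∀ y ∈ t, 1 / ((x - y) * ∏ z ∈ (insert a t).erase y, (y - z)) =
        (x - a)⁻¹ * (1 / ((x - y) * ∏ z ∈ t.erase y, (y - z))
          + -(1 / ((a - y) * ∏ z ∈ t.erase y, (y - z)))) := by
      intro y hy
      have hya : y ≠ a := fun h => ha (h ▸ hy)
      rw [Finset.erase_insert_of_ne hya.symm,
        Finset.prod_insert (fun h => ha (Finset.mem_of_mem_erase h))]
      have h1 : x - y ≠ 0 := sub_ne_zero.mpr (fun h => hxt (h ▸ hy))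
      have h2 : y - a ≠ 0 := sub_ne_zero.mpr hya
      have h3 : a - y ≠ 0 := sub_ne_zero.mpr hya.symm
      have h4 : x - a ≠ 0 := sub_ne_zero.mpr hxa
      have h5 : (∏ z ∈ t.erase y, (y - z)) ≠ 0 := by
        refine Finset.prod_ne_zero_iff.mpr (fun z hz => sub_ne_zero.mpr ?_)
        exact fun h => (Finset.ne_of_mem_erase hz) (h ▸ rfl)
      field_simp
      ring
    have hQa : (∏ z ∈ t, (a - z)) ≠ 0 := by
      refine Finset.prod_ne_zero_iff.mpr (fun z hz => sub_ne_zero.mpr ?_)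
      exact fun h => ha (h ▸ hz)
    have hQx : (∏ z ∈ t, (x - z)) ≠ 0 := by
      refine Finset.prod_ne_zero_iff.mpr (fun z hz => sub_ne_zero.mpr ?_)
      exact fun h => hxt (h ▸ hz)
    have h4 : x - a ≠ 0 := sub_ne_zero.mpr hxa
    rw [Finset.sum_insert ha, Finset.erase_insert ha, Finset.sum_congr rfl key,
      ← Finset.mul_sum, Finset.sum_add_distrib, ih ht x hxt, Finset.sum_neg_distrib,
      ih ht a ha, Finset.prod_insert ha]
    field_simp
    ring


/-- Sums of `y^d / ∏ (y - z)` vanish for small `d`. -/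
lemma monomial_lemma (s : Finset ℝ) :
    ∀ d : ℕ, d + 2 ≤ s.card → ∑ y ∈ s, y ^ d / ∏ z ∈ s.erase y, (y - z) = 0 := by
  induction s using Finset.induction_on with
  | empty => intro d hd; simp at hd
  | @insert a t ha ih =>
    intro d hd
    rw [Finset.card_insert_of_notMem ha] at hd
    have ht : t.Nonempty := Finset.card_pos.mp (by omega)
    have key : ∀ y ∈ t, y ^ d / ∏ z ∈ (insert a t).erase y, (y - z) =
        y ^ d / ((y - a) * ∏ z ∈ t.erase y, (y - z)) := by
      intro y hy
      have hya : y ≠ a := fun h => ha (h ▸ hy)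
      rw [Finset.erase_insert_of_ne hya.symm,
        Finset.prod_insert (fun h => ha (Finset.mem_of_mem_erase h))]
    have ha2 : a ^ d / ∏ z ∈ t, (a - z) =
        ∑ y ∈ t, a ^ d / ((a - y) * ∏ z ∈ t.erase y, (y - z)) := by
      rw [div_eq_mul_one_div, ← pf_lemma t ht a ha, Finset.mul_sum]
      exact Finset.sum_congr rfl fun y hy => (mul_one_div _ _)
    have key2 : ∀ y ∈ t,
        a ^ d / ((a - y) * ∏ z ∈ t.erase y, (y - z))
          + y ^ d / ((y - a) * ∏ z ∈ t.erase y, (y - z)) =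
        ∑ e ∈ Finset.range d, a ^ (d - 1 - e) * (y ^ e / ∏ z ∈ t.erase y, (y - z)) := by
      intro y hy
      have hya : y ≠ a := fun h => ha (h ▸ hy)
      have h2 : y - a ≠ 0 := sub_ne_zero.mpr hya
      have h3 : a - y ≠ 0 := sub_ne_zero.mpr hya.symm
      have h5 : (∏ z ∈ t.erase y, (y - z)) ≠ 0 := by
        refine Finset.prod_ne_zero_iff.mpr (fun z hz => sub_ne_zero.mpr ?_)
        exact fun h => (Finset.ne_of_mem_erase hz) (h ▸ rfl)
      have step1 : a ^ d / ((a - y) * ∏ z ∈ t.erase y, (y - z))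
          + y ^ d / ((y - a) * ∏ z ∈ t.erase y, (y - z)) =
          (y ^ d - a ^ d) / ((y - a) * ∏ z ∈ t.erase y, (y - z)) := by
        field_simp
        ring
      rw [step1, ← geom_sum₂_mul y a d, mul_comm (y - a), mul_div_mul_right _ _ h2,
        Finset.sum_div]
      exact Finset.sum_congr rfl fun e he => by rw [mul_comm (y ^ e), mul_div_assoc]
    rw [Finset.sum_insert ha, Finset.erase_insert ha, Finset.sum_congr rfl key, ha2,
      ← Finset.sum_add_distrib, Finset.sum_congr rfl key2, Finset.sum_comm]
    refine Finset.sum_eq_zero fun e he => ?_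
    simp only [Finset.mem_range] at he
    rw [← Finset.mul_sum, ih e (by omega), mul_zero]

/-- Sums of `p(y) / ∏ (y - z)` vanish for `deg p` small. -/
lemma poly_lemma (s : Finset ℝ) (p : Polynomial ℝ) (hp : p.natDegree + 2 ≤ s.card) :
    ∑ y ∈ s, p.eval y / ∏ z ∈ s.erase y, (y - z) = 0 := by
  have : ∀ y ∈ s, p.eval y / ∏ z ∈ s.erase y, (y - z) =
      ∑ d ∈ Finset.range (p.natDegree + 1),
        p.coeff d * (y ^ d / ∏ z ∈ s.erase y, (y - z)) := by
    intro y hy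
    rw [Polynomial.eval_eq_sum_range, Finset.sum_div]
    exact Finset.sum_congr rfl fun d hd => by rw [mul_div_assoc]
  rw [Finset.sum_congr rfl this, Finset.sum_comm]
  refine Finset.sum_eq_zero fun d hd => ?_
  rw [← Finset.mul_sum, monomial_lemma s d (by simp only [Finset.mem_range] at hd; omega),
    mul_zero]

/-- Divided difference of `y ↦ 1/(y+c)`. -/
lemma inv_lemma (s : Finset ℝ) (hs : s.Nonempty) (c : ℝ) (hc : ∀ y ∈ s, y + c ≠ 0) :
    ∑ y ∈ s, (1 / (y + c)) / ∏ z ∈ s.erase y, (y - z) =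
      (-1) ^ (s.card + 1) / ∏ y ∈ s, (y + c) := by
  have hcs : (-c) ∉ s := fun h => hc _ h (by ring)
  have := pf_lemma s hs (-c) hcs
  have hQ : (∏ y ∈ s, (y + c)) ≠ 0 := Finset.prod_ne_zero_iff.mpr hc
  have e1 : ∀ y ∈ s, 1 / ((-c - y) * ∏ z ∈ s.erase y, (y - z)) =
      -((1 / (y + c)) / ∏ z ∈ s.erase y, (y - z)) := by
    intro y hy
    rw [show -c - y = -(y + c) by ring, neg_mul, div_neg, div_div]
  have h01 : ∏ y ∈ s, (-c - y) = (-1) ^ s.card * ∏ y ∈ s, (y + c) := by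
    rw [Finset.prod_congr rfl (fun y _ => show -c - y = -1 * (y + c) by ring),
      Finset.prod_mul_distrib, Finset.prod_const]
  rw [Finset.sum_congr rfl e1, Finset.sum_neg_distrib, h01] at this
  have hiq : (1 : ℝ) / ((-1) ^ s.card * ∏ y ∈ s, (y + c)) =
      (-1) ^ s.card / ∏ y ∈ s, (y + c) := by
    rw [one_div, mul_inv, ← inv_pow, inv_neg, inv_one, ← div_eq_mul_inv]
  rw [hiq] at this
  rw [pow_succ, mul_neg_one, neg_div, ← this, neg_neg]


lemma hder {x : ℝ} (hx : 0 < x) : DifferentiableAt ℝ (fun t => Real.log (Real.Gamma t)) x := by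
  refine (Real.differentiableAt_Gamma ?_).log (Real.Gamma_ne_zero ?_) <;>
    exact fun m => ne_of_gt (lt_of_le_of_lt (neg_nonpos.mpr m.cast_nonneg) hx)

lemma digamma_eq {x : ℝ} (hx : 0 < x) :
    digamma x = deriv (fun t => Real.log (Real.Gamma t)) x := by
  rw [digamma, deriv.log (Real.differentiableAt_Gamma ?_) (Real.Gamma_ne_zero ?_)] <;>
    exact fun m => ne_of_gt (lt_of_le_of_lt (neg_nonpos.mpr m.cast_nonneg) hx)

lemma digamma_rec {x : ℝ} (hx : 0 < x) : digamma (x + 1) = digamma x + 1 / x := by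
  rw [digamma_eq (by linarith), digamma_eq hx]
  rw [← deriv_comp_add_const, one_div, ← Real.deriv_log,
    ← deriv_add (hder hx) (Real.differentiableAt_log hx.ne')]
  apply Filter.EventuallyEq.deriv_eq
  filter_upwards [eventually_gt_nhds hx] with t ht
  simp only [Real.Gamma_add_one ht.ne', Real.log_mul ht.ne' (Real.Gamma_pos_of_pos ht).ne',
    add_comm, Pi.add_apply]

lemma digamma_add_nat {x : ℝ} (hx : 0 < x) (m : ℕ) :
    digamma (x + m) = digamma x + ∑ j ∈ Finset.range m, 1 / (x + j) := by
  induction m with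
  | zero => simp
  | succ m ih =>
    have : x + (m + 1 : ℕ) = (x + m) + 1 := by push_cast; ring
    rw [this, digamma_rec (by positivity), ih, Finset.sum_range_succ]
    ring

lemma digamma_mono {x y : ℝ} (hx : 0 < x) (hxy : x ≤ y) : digamma x ≤ digamma y := by
  rcases eq_or_lt_of_le hxy with rfl | hlt
  · exact le_rfl
  have hc : ConvexOn ℝ (Set.Ioi 0) (fun t => Real.log (Real.Gamma t)) := Real.convexOn_log_Gamma
  have hy : 0 < y := lt_trans hx hlt
  rw [digamma_eq hx, digamma_eq hy]
  calc deriv (fun t => Real.log (Real.Gamma t)) x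
      ≤ slope (fun t => Real.log (Real.Gamma t)) x y :=
        hc.deriv_le_slope (Set.mem_Ioi.mpr hx) (Set.mem_Ioi.mpr hy) hlt (hder hx)
    _ ≤ deriv (fun t => Real.log (Real.Gamma t)) y :=
        hc.slope_le_deriv (Set.mem_Ioi.mpr hx) (Set.mem_Ioi.mpr hy) hlt (hder hy)

lemma summable_norm_aux {x y : ℝ} (hx : 0 < x) (hy : 0 < y) :
    Summable (fun n : ℕ => ‖1 / (y + n) - 1 / (x + n)‖) := by
  have hmaj : Summable (fun n : ℕ =>
      |x - y| / (min x 1 * min y 1) * (1 / ((n : ℝ) + 1)) ^ 2) := by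
    apply Summable.mul_left
    have h1 : Summable (fun n : ℕ => (1 / ((n : ℝ)) ^ 2)) :=
      summable_one_div_nat_pow.mpr one_lt_two
    have h2 := (summable_nat_add_iff 1).mpr h1
    apply h2.congr
    intro n
    push_cast
    rw [div_pow, one_pow]
  refine Summable.of_nonneg_of_le (fun n => norm_nonneg _) (fun n => ?_) hmaj
  have hxn : (0 : ℝ) < x + n := by positivity
  have hyn : (0 : ℝ) < y + n := by positivity
  have key : 1 / (y + n) - 1 / (x + n) = (x - y) / ((y + n) * (x + n)) := by
    field_simp
    ring
  rw [key, Real.norm_eq_abs, abs_div,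
    abs_of_pos (show (0:ℝ) < (y + n) * (x + n) by positivity)]
  have hb1 : min x 1 * ((n : ℝ) + 1) ≤ x + n := by
    rcases le_total x 1 with h | h
    · rw [min_eq_left h]; nlinarith [Nat.cast_nonneg (α := ℝ) n]
    · rw [min_eq_right h]; nlinarith
  have hb2 : min y 1 * ((n : ℝ) + 1) ≤ y + n := by
    rcases le_total y 1 with h | h
    · rw [min_eq_left h]; nlinarith [Nat.cast_nonneg (α := ℝ) n]
    · rw [min_eq_right h]; nlinarith
  have hm1 : (0 : ℝ) < min x 1 := lt_min hx one_pos
  have hm2 : (0 : ℝ) < min y 1 := lt_min hy one_pos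
  have hn1 : (0 : ℝ) < (n : ℝ) + 1 := by positivity
  have hr : |x - y| / (min x 1 * min y 1) * (1 / ((n : ℝ) + 1)) ^ 2 =
      |x - y| / (min x 1 * min y 1 * ((n : ℝ) + 1) ^ 2) := by
    rw [div_pow, one_pow, div_mul_div_comm, mul_one]
  rw [hr]
  apply div_le_div_of_nonneg_left (abs_nonneg _) (by positivity)
  have hprod := mul_le_mul hb2 hb1 (le_of_lt (by positivity)) (le_of_lt hyn)
  nlinarith [hprod]

lemma digamma_diff_tendsto_aux {x y : ℝ} (hx : 0 < x) (hxy : x ≤ y) :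
    Filter.Tendsto (fun m : ℕ => digamma (y + m) - digamma (x + m)) Filter.atTop (nhds 0) := by
  obtain ⟨N, hN⟩ := exists_nat_ge (y - x)
  have hub : Filter.Tendsto (fun m : ℕ => (N : ℝ) * (1 / m)) Filter.atTop (nhds 0) := by
    simpa using tendsto_one_div_atTop_nhds_zero_nat.const_mul (N : ℝ)
  refine tendsto_of_tendsto_of_tendsto_of_le_of_le' tendsto_const_nhds hub ?_ ?_
  · filter_upwards with m
    have : (0:ℝ) < x + m := by positivity
    have := digamma_mono this (by linarith : x + (m:ℝ) ≤ y + m)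
    linarith
  · filter_upwards [Filter.eventually_ge_atTop 1] with m hm
    have hm' : (1 : ℝ) ≤ (m : ℝ) := by exact_mod_cast hm
    have hxm : (0:ℝ) < x + m := by positivity
    have step1 : digamma (y + m) ≤ digamma ((x + m) + N) := by
      have hm0 : (0:ℝ) ≤ (m:ℝ) := Nat.cast_nonneg m
      apply digamma_mono (by linarith) (by linarith)
    have step2 : digamma ((x + m) + N) = digamma (x + m)
        + ∑ j ∈ Finset.range N, 1 / ((x + m) + j) := digamma_add_nat hxm N
    have step3 : ∑ j ∈ Finset.range N, 1 / ((x + m) + j) ≤ (N : ℝ) * (1 / m) := by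
      calc ∑ j ∈ Finset.range N, 1 / ((x + m) + j)
          ≤ ∑ _j ∈ Finset.range N, 1 / (m : ℝ) := by
            refine Finset.sum_le_sum fun j hj => ?_
            apply one_div_le_one_div_of_le (by linarith)
            have : (0:ℝ) ≤ (j:ℝ) := Nat.cast_nonneg j
            linarith
        _ = (N : ℝ) * (1 / m) := by rw [Finset.sum_const, Finset.card_range, nsmul_eq_mul]
    linarith

lemma digamma_hasSum {x y : ℝ} (hx : 0 < x) (hy : 0 < y) :
    HasSum (fun n : ℕ => 1 / (y + n) - 1 / (x + n)) (digamma x - digamma y) := by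
  have h0 : Filter.Tendsto (fun m : ℕ => digamma (y + m) - digamma (x + m))
      Filter.atTop (nhds 0) := by
    rcases le_total x y with h | h
    · exact digamma_diff_tendsto_aux hx h
    · simpa using (digamma_diff_tendsto_aux hy h).neg
  rw [hasSum_iff_tendsto_nat_of_summable_norm (summable_norm_aux hx hy)]
  have key : ∀ n : ℕ, ∑ i ∈ Finset.range n, (1 / (y + i) - 1 / (x + i)) =
      (digamma x - digamma y) - (digamma (x + n) - digamma (y + n)) := by
    intro n
    rw [Finset.sum_sub_distrib]
    have h1 := digamma_add_nat hx n
    have h2 := digamma_add_nat hy n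
    linarith
  simp only [key]
  have hc : Filter.Tendsto (fun _ : ℕ => digamma x - digamma y) Filter.atTop
      (nhds (digamma x - digamma y)) := tendsto_const_nhds
  have hd : Filter.Tendsto (fun n : ℕ => digamma (x + n) - digamma (y + n))
      Filter.atTop (nhds 0) := by simpa [neg_sub] using h0.neg
  simpa using hc.sub hd




lemma pern (k n : ℕ) (s : Finset ℝ) (hcard : s.card = k + 2) (hpos : ∀ y ∈ s, 0 < y) :
    0 ≤ ∑ y ∈ s, (gbinom (y - 1) k * (1 / ((k : ℝ) + 1 + n) - 1 / (y + n)))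
      / ∏ z ∈ s.erase y, (y - z) := by
  have hfk : (Nat.factorial k : ℝ) ≠ 0 := Nat.cast_ne_zero.mpr (Nat.factorial_ne_zero k)
  have hc0 : ((k : ℝ) + 1 + n) ≠ 0 := by positivity
  set P : Polynomial ℝ := ∏ i ∈ Finset.range k, (Polynomial.X - Polynomial.C ((i : ℝ) + 1))
    with hPdef
  have hPeval : ∀ y : ℝ, P.eval y = ∏ i ∈ Finset.range k, (y - ((i : ℝ) + 1)) := by
    intro y; simp [hPdef, Polynomial.eval_prod]
  have hgb : ∀ y : ℝ, gbinom (y - 1) k = P.eval y / (Nat.factorial k) := by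
    intro y; rw [gbinom, hPeval]
    congr 1
    exact Finset.prod_congr rfl fun i _ => by ring
  have hPdeg : P.natDegree = k := by
    rw [hPdef, Polynomial.natDegree_prod _ _ (fun i _ => Polynomial.X_sub_C_ne_zero _)]
    simp only [Polynomial.natDegree_X_sub_C, Finset.sum_const, Finset.card_range, smul_eq_mul,
      mul_one]
  clear_value P
  obtain ⟨q, hq⟩ := Polynomial.X_sub_C_dvd_sub_C_eval (a := -(n : ℝ)) (p := P)
  set v := P.eval (-(n : ℝ)) with hvdef
  clear_value v
  have hqdeg : q.natDegree ≤ k := by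
    rcases eq_or_ne q 0 with rfl | hq0
    · simp
    · have hPC : P - Polynomial.C v ≠ 0 := by
        rw [hq]
        exact mul_ne_zero (Polynomial.X_sub_C_ne_zero _) hq0
      have h1 : q.natDegree ≤ (P - Polynomial.C v).natDegree :=
        Polynomial.natDegree_le_of_dvd ⟨Polynomial.X - Polynomial.C (-(n:ℝ)), by rw [hq]; ring⟩ hPC
      have h2 : (P - Polynomial.C v).natDegree ≤ k := by
        refine le_trans (Polynomial.natDegree_sub_le _ _) (max_le (le_of_eq hPdeg) ?_)
        simp
      exact le_trans h1 h2
  have hPy : ∀ y : ℝ, P.eval y = (y + n) * q.eval y + v := by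
    intro y
    have := congrArg (Polynomial.eval y) hq
    simp only [Polynomial.eval_sub, Polynomial.eval_mul, Polynomial.eval_X, Polynomial.eval_C,
      sub_neg_eq_add] at this
    linarith
  set R := Polynomial.C (1 / ((Nat.factorial k : ℝ) * ((k : ℝ) + 1 + n))) * P
    - Polynomial.C (1 / (Nat.factorial k : ℝ)) * q with hR
  have hRdeg : R.natDegree + 2 ≤ s.card := by
    rw [hcard]
    have h1 : (Polynomial.C (1 / ((Nat.factorial k : ℝ) * ((k : ℝ) + 1 + n))) * P).natDegree ≤ k :=
      le_trans (Polynomial.natDegree_C_mul_le _ _) (le_of_eq hPdeg)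
    have h2 : (Polynomial.C (1 / (Nat.factorial k : ℝ)) * q).natDegree ≤ k :=
      le_trans (Polynomial.natDegree_C_mul_le _ _) hqdeg
    have h3 : R.natDegree ≤ k := by
      rw [hR]
      exact le_trans (Polynomial.natDegree_sub_le _ _) (max_le h1 h2)
    omega
  have key : ∀ y ∈ s, (gbinom (y - 1) k * (1 / ((k : ℝ) + 1 + n) - 1 / (y + n)))
      / ∏ z ∈ s.erase y, (y - z) =
      R.eval y / ∏ z ∈ s.erase y, (y - z)
        - (v / (Nat.factorial k)) * ((1 / (y + n)) / ∏ z ∈ s.erase y, (y - z)) := by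
    intro y hy
    have hy0 : 0 < y := hpos y hy
    have hyn : y + (n : ℝ) ≠ 0 := by positivity
    have hnum : gbinom (y - 1) k * (1 / ((k : ℝ) + 1 + n) - 1 / (y + n)) =
        R.eval y - (v / (Nat.factorial k)) * (1 / (y + n)) := by
      rw [hgb y, hR]
      simp only [Polynomial.eval_sub, Polynomial.eval_mul, Polynomial.eval_C]
      rw [hPy y]
      field_simp
      ring
    rw [hnum, sub_div, mul_div_assoc]
  have hsne : s.Nonempty := Finset.card_pos.mp (by omega)
  have hyn' : ∀ y ∈ s, y + (n : ℝ) ≠ 0 := fun y hy => by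
    have := hpos y hy; positivity
  rw [Finset.sum_congr rfl key, Finset.sum_sub_distrib, poly_lemma s R hRdeg,
    ← Finset.mul_sum, inv_lemma s hsne (n : ℝ) hyn', hcard]
  have hv : v = (-1) ^ k * ∏ i ∈ Finset.range k, ((n : ℝ) + 1 + i) := by
    rw [hvdef, hPeval,
      show (∏ i ∈ Finset.range k, (-(n:ℝ) - ((i:ℝ) + 1)))
          = ∏ i ∈ Finset.range k, (-1 : ℝ) * ((n:ℝ) + 1 + (i:ℝ)) from
        Finset.prod_congr rfl (fun i _ => by ring),
      Finset.prod_mul_distrib, Finset.prod_const, Finset.card_range]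
  have hsq : (-1 : ℝ) ^ k * (-1 : ℝ) ^ k = 1 := by
    rw [← pow_add]
    exact Even.neg_one_pow ⟨k, by ring⟩
  have hD : (0 : ℝ) < ∏ y ∈ s, (y + n) := by
    refine Finset.prod_pos fun y hy => ?_
    have := hpos y hy; positivity
  have hPi : (0 : ℝ) ≤ ∏ i ∈ Finset.range k, ((n : ℝ) + 1 + i) := by
    refine Finset.prod_nonneg fun i _ => by positivity
  have hpow : ((-1 : ℝ)) ^ (k + 2 + 1) = -(-1 : ℝ) ^ k := by
    rw [pow_add, pow_add]; norm_num
  have hfinal : (0:ℝ) - v / ↑(Nat.factorial k) * ((-1:ℝ) ^ (k + 2 + 1) / ∏ y ∈ s, (y + ↑n)) =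
      (∏ i ∈ Finset.range k, ((n:ℝ) + 1 + ↑i)) /
        (↑(Nat.factorial k) * ∏ y ∈ s, (y + ↑n)) := by
    rw [hv, hpow]
    linear_combination ((∏ i ∈ Finset.range k, ((n:ℝ) + 1 + ↑i)) /
      (↑(Nat.factorial k) * ∏ y ∈ s, (y + ↑n))) * hsq
  rw [hfinal]
  have hfk0 : (0:ℝ) < (Nat.factorial k : ℝ) := Nat.cast_pos.mpr (Nat.factorial_pos k)
  exact div_nonneg hPi (le_of_lt (mul_pos hfk0 hD))

end AuxProof

/-- For every `k`, the function `x ↦ C(x-1, k) (ψ(x) - ψ(k+1))` is `k`-convex on `(0,∞)`. -/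
theorem stmt_16 (k : ℕ) :
    ConvexOrderOn (fun x => gbinom (x - 1) k * (digamma x - digamma (k + 1)))
      k (Set.Ioi 0) := by
  intro x hxS hinj
  classical
  have hcard : (Finset.image x Finset.univ).card = k + 2 := by
    rw [Finset.card_image_of_injective _ hinj, Finset.card_univ, Fintype.card_fin]
  have hpos : ∀ y ∈ Finset.image x Finset.univ, 0 < y := by
    intro y hy
    obtain ⟨i, -, rfl⟩ := Finset.mem_image.mp hy
    exact hxS i
  have him : ∀ i : Fin (k + 2), ∏ j ∈ Finset.univ.erase i, (x i - x j)
      = ∏ z ∈ (Finset.image x Finset.univ).erase (x i), (x i - z) := by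
    intro i
    rw [← Finset.image_erase hinj, Finset.prod_image (fun a _ b _ h => hinj h)]
  have hdd : divDiff (fun t => gbinom (t - 1) k * (digamma t - digamma (k + 1))) x
      = ∑ y ∈ Finset.image x Finset.univ,
          (gbinom (y - 1) k * (digamma y - digamma (k + 1)))
            / ∏ z ∈ (Finset.image x Finset.univ).erase y, (y - z) := by
    rw [divDiff, Finset.sum_image (fun a _ b _ h => hinj h)]
    exact Finset.sum_congr rfl fun i _ => by rw [him i]
  have hk1 : (0 : ℝ) < (k : ℝ) + 1 := by positivity
  have hA : ∀ y ∈ Finset.image x Finset.univ,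
      HasSum (fun n : ℕ => (gbinom (y - 1) k * (1 / ((k : ℝ) + 1 + n) - 1 / (y + n)))
        / ∏ z ∈ (Finset.image x Finset.univ).erase y, (y - z))
      ((gbinom (y - 1) k * (digamma y - digamma ((k : ℝ) + 1)))
        / ∏ z ∈ (Finset.image x Finset.univ).erase y, (y - z)) := by
    intro y hy
    exact ((digamma_hasSum (hpos y hy) hk1).mul_left _).div_const _
  have hTot := hasSum_sum hA
  rw [hdd]
  exact hasSum_le (fun n => pern k n _ hcard hpos) hasSum_zero hTot
end

section
/- Let a ≥ 1, m ∈ ℕ, f : (0,∞) → ℝ, and fix a real x ≥ 0. Assume that for each k = 0,…,m: (i) there exists q_k ∈ ℕ such that the function u_k : (0,∞) → ℝ, u_k(t) = C(x−t, k)·Δ^{k+1} f(t+a−1), lies in D^{q_k} ∩ K^{q_k}; and (ii) there exists a positive integer p_k such that the function v_k : (0,∞) → ℝ, v_k(t) = C(x−t+1, k)·Δ^k f(t+a−1), lies in D^{p_k} ∩ K^{p_k}. Let S : (0,∞) → ℝ be any function satisfying ΔS = u_m on (0,∞), S(1) = 0, and S ∈ K^{q_m}. Then f(x+a) = Σ_{j=0}^{m}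 C(x, j)·Δ^j f(a) + S(x+1). -/
open Finset Filter

lemma erase_univ_eq {n : ℕ} (i0 : Fin (n+1)) :
    (Finset.univ.erase i0) = Finset.univ.map i0.succAboveEmb := by
  ext j
  simp [Fin.exists_succAbove_eq_iff]

lemma image_univ_succAbove {n : ℕ} (i0 : Fin (n+1)) :
    Finset.univ.image i0.succAbove = Finset.univ.erase i0 := by
  rw [erase_univ_eq, Finset.map_eq_image]
  rfl

lemma prod_succAbove {n : ℕ} (i0 : Fin (n+1)) (g : Fin (n+1) → ℝ) :
    ∏ k : Fin n, g (i0.succAbove k) = ∏ j ∈ Finset.univ.erase i0, g j := by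
  rw [erase_univ_eq, Finset.prod_map]
  rfl

lemma sum_succAbove {n : ℕ} (i0 : Fin (n+1)) (g : Fin (n+1) → ℝ) :
    ∑ k : Fin n, g (i0.succAbove k) = ∑ j ∈ Finset.univ.erase i0, g j := by
  rw [erase_univ_eq, Finset.sum_map]
  rfl

lemma divDiff_erase (f : ℝ → ℝ) {n : ℕ} (x : Fin (n+1) → ℝ) (i0 : Fin (n+1)) :
    divDiff f (x ∘ i0.succAbove) =
      ∑ i ∈ Finset.univ.erase i0, f (x i) / ∏ j ∈ (Finset.univ.erase i0).erase i, (x i - x j) := by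
  rw [← sum_succAbove i0 (fun i => f (x i) / ∏ j ∈ (Finset.univ.erase i0).erase i, (x i - x j))]
  unfold divDiff
  refine Finset.sum_congr rfl fun k _ => ?_
  congr 1
  calc ∏ j ∈ Finset.univ.erase k, ((x ∘ i0.succAbove) k - (x ∘ i0.succAbove) j)
      = ∏ j ∈ (Finset.univ.erase k).image i0.succAbove, (x (i0.succAbove k) - x j) := by
        rw [Finset.prod_image (fun a _ b _ h => Fin.succAbove_right_injective h)]
        rfl
    _ = ∏ j ∈ (Finset.univ.erase i0).erase (i0.succAbove k), (x (i0.succAbove k) - x j) := by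
        congr 1
        rw [Finset.image_erase Fin.succAbove_right_injective, image_univ_succAbove]

lemma divDiff_rec (f : ℝ → ℝ) {p : ℕ} (x : Fin (p+2) → ℝ) (hx : Function.Injective x)
    (i0 i1 : Fin (p+2)) (h01 : i0 ≠ i1) :
    divDiff f (x ∘ i1.succAbove) - divDiff f (x ∘ i0.succAbove)
      = (x i0 - x i1) * divDiff f x := by
  classical
  have hc : x i0 - x i1 ≠ 0 := sub_ne_zero.mpr (fun e => h01 (hx e))
  set s : Finset (Fin (p+2)) := (Finset.univ.erase i0).erase i1 with hs
  have hi0mem : i0 ∈ Finset.univ.erase i1 := by simp [h01]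
  have hi1mem : i1 ∈ Finset.univ.erase i0 := by simp [Ne.symm h01]
  have hsplit1 : Finset.univ.erase i1 = insert i0 s := by
    rw [hs, Finset.erase_right_comm, Finset.insert_erase hi0mem]
  have hsplit0 : Finset.univ.erase i0 = insert i1 s := by
    rw [hs, Finset.insert_erase hi1mem]
  have hsplitU : (Finset.univ : Finset (Fin (p+2))) = insert i0 (insert i1 s) := by
    rw [← hsplit0, Finset.insert_erase (Finset.mem_univ i0)]
  have hi0s : i0 ∉ s := by simp [hs]
  have hi1s : i1 ∉ s := by simp [hs]
  have hi0ins : i0 ∉ insert i1 s := by simp [hs, h01]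
  rw [divDiff_erase, divDiff_erase]
  unfold divDiff
  have hA : f (x i0) / ∏ j ∈ ((Finset.univ.erase i1)).erase i0, (x i0 - x j)
      = (x i0 - x i1) * (f (x i0) / ∏ j ∈ Finset.univ.erase i0, (x i0 - x j)) := by
    rw [← Finset.mul_prod_erase (Finset.univ.erase i0) _ hi1mem, mul_div_assoc',
      mul_div_mul_left _ _ hc, Finset.erase_right_comm]
  have hB : - (f (x i1) / ∏ j ∈ ((Finset.univ.erase i0)).erase i1, (x i1 - x j))
      = (x i0 - x i1) * (f (x i1) / ∏ j ∈ Finset.univ.erase i1, (x i1 - x j)) := by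
    rw [← Finset.mul_prod_erase (Finset.univ.erase i1) _ hi0mem]
    have : x i1 - x i0 = -(x i0 - x i1) := by ring
    rw [this, neg_mul, div_neg, mul_neg, mul_div_assoc', mul_div_mul_left _ _ hc,
      Finset.erase_right_comm]
  have hsterm : ∀ i ∈ s,
      f (x i) / ∏ j ∈ ((Finset.univ.erase i1)).erase i, (x i - x j)
        - f (x i) / ∏ j ∈ ((Finset.univ.erase i0)).erase i, (x i - x j)
      = (x i0 - x i1) * (f (x i) / ∏ j ∈ Finset.univ.erase i, (x i - x j)) := by
    intro i hi
    have hii0 : i ≠ i0 := by rintro rfl; exact hi0s hi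
    have hii1 : i ≠ i1 := by rintro rfl; exact hi1s hi
    have hα : x i - x i0 ≠ 0 := sub_ne_zero.mpr (fun e => hii0 (hx e))
    have hβ : x i - x i1 ≠ 0 := sub_ne_zero.mpr (fun e => hii1 (hx e))
    have m1 : i0 ∈ (Finset.univ.erase i1).erase i := by simp [h01, Ne.symm hii0]
    have m2 : i1 ∈ (Finset.univ.erase i0).erase i := by simp [Ne.symm h01, Ne.symm hii1]
    have m3 : i0 ∈ (Finset.univ.erase i : Finset (Fin (p+2))) := by simp [Ne.symm hii0]
    have m4 : i1 ∈ ((Finset.univ.erase i).erase i0 : Finset (Fin (p+2))) := by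
      simp [Ne.symm h01, Ne.symm hii1]
    rw [← Finset.mul_prod_erase _ _ m1, ← Finset.mul_prod_erase _ _ m2,
      ← Finset.mul_prod_erase _ _ m3, ← Finset.mul_prod_erase _ _ m4]
    have hset1 : ((Finset.univ.erase i1).erase i).erase i0
        = (((Finset.univ.erase i).erase i0).erase i1 : Finset (Fin (p+2))) := by
      rw [Finset.erase_right_comm (a := i1), Finset.erase_right_comm (a := i1)]
    have hset2 : ((Finset.univ.erase i0).erase i).erase i1
        = (((Finset.univ.erase i).erase i0).erase i1 : Finset (Fin (p+2))) := by
      rw [Finset.erase_right_comm (a := i0)]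
    rw [hset1, hset2]
    set Q := ∏ j ∈ ((Finset.univ.erase i).erase i0).erase i1, (x i - x j) with hQ
    rcases eq_or_ne Q 0 with h0 | h0
    · simp [h0]
    · field_simp
      ring
  have key : ∀ (A B C : Fin (p+2) → ℝ),
      (A i0 = (x i0 - x i1) * C i0) → (-B i1 = (x i0 - x i1) * C i1) →
      (∀ i ∈ s, A i - B i = (x i0 - x i1) * C i) →
      (∑ i ∈ Finset.univ.erase i1, A i) - (∑ i ∈ Finset.univ.erase i0, B i)
        = (x i0 - x i1) * ∑ i, C i := by
    intro A B C hA' hB' hs'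
    have e1 : (∑ i ∈ Finset.univ.erase i1, A i) = A i0 + ∑ i ∈ s, A i := by
      rw [← Finset.add_sum_erase _ A hi0mem, Finset.erase_right_comm]
    have e2 : (∑ i ∈ Finset.univ.erase i0, B i) = B i1 + ∑ i ∈ s, B i := by
      rw [← Finset.add_sum_erase _ B hi1mem]
    have e3 : (∑ i, C i) = C i0 + (C i1 + ∑ i ∈ s, C i) := by
      rw [← Finset.add_sum_erase _ C (Finset.mem_univ i0), ← Finset.add_sum_erase _ C hi1mem]
    have e4 : (∑ i ∈ s, A i) - (∑ i ∈ s, B i) = ∑ i ∈ s, (x i0 - x i1) * C i := by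
      rw [← Finset.sum_sub_distrib]
      exact Finset.sum_congr rfl hs'
    rw [e1, e2, e3, mul_add, mul_add, Finset.mul_sum]
    have := e4
    linarith [e4]
  exact key _ _ _ hA hB hsterm

lemma divDiff_sub (f g : ℝ → ℝ) {n : ℕ} (x : Fin n → ℝ) :
    divDiff (fun t => f t - g t) x = divDiff f x - divDiff g x := by
  unfold divDiff
  rw [← Finset.sum_sub_distrib]
  exact Finset.sum_congr rfl fun i _ => sub_div _ _ _

lemma divDiff_neg (f : ℝ → ℝ) {n : ℕ} (x : Fin n → ℝ) :
    divDiff (fun t => -f t) x = -divDiff f x := by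
  unfold divDiff
  rw [← Finset.sum_neg_distrib]
  exact Finset.sum_congr rfl fun i _ => neg_div _ _

lemma divDiff_sum {ι : Type*} (s : Finset ι) (F : ι → ℝ → ℝ) {n : ℕ} (x : Fin n → ℝ) :
    divDiff (fun t => ∑ k ∈ s, F k t) x = ∑ k ∈ s, divDiff (F k) x := by
  unfold divDiff
  rw [Finset.sum_comm]
  exact Finset.sum_congr rfl fun i _ => Finset.sum_div _ _ _

lemma divDiff_const (c : ℝ) : ∀ (p : ℕ) (x : Fin (p+2) → ℝ), Function.Injective x →
    divDiff (fun _ => c) x = 0 := by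
  intro p
  induction p with
  | zero =>
    intro x hx
    have h0 : (Finset.univ : Finset (Fin 2)).erase 0 = {1} := by decide
    have h1 : (Finset.univ : Finset (Fin 2)).erase 1 = {0} := by decide
    unfold divDiff
    rw [Fin.sum_univ_two, h0, h1, Finset.prod_singleton, Finset.prod_singleton,
      show x 1 - x 0 = -(x 0 - x 1) by ring, div_neg]
    ring
  | succ p ih =>
    intro x hx
    have h01 : (0 : Fin (p+3)) ≠ 1 := by simp [Fin.ext_iff]
    have h := divDiff_rec (fun _ => c) x hx 0 1 h01
    rw [ih _ (hx.comp Fin.succAbove_right_injective),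
      ih _ (hx.comp Fin.succAbove_right_injective), sub_self] at h
    have hc : x 0 - x 1 ≠ 0 := sub_ne_zero.mpr (fun e => h01 (hx e))
    exact ((mul_eq_zero.mp h.symm).resolve_left hc)

lemma divDiff_int (f : ℝ → ℝ) : ∀ (p : ℕ) (t : ℝ),
    divDiff f (fun i : Fin (p+1) => t + i) = fdiff^[p] f t / (Nat.factorial p) := by
  intro p
  induction p with
  | zero =>
    intro t
    unfold divDiff
    simp
  | succ p ih =>
    intro t
    set x : Fin (p+2) → ℝ := fun i => t + i with hxdef
    have hx : Function.Injective x := by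
      intro i j h
      have : ((i : ℕ) : ℝ) = ((j : ℕ) : ℝ) := by
        simpa [hxdef] using h
      exact Fin.ext (Nat.cast_injective this)
    have hne : (Fin.last (p+1)) ≠ (0 : Fin (p+2)) := by
      simp [Fin.ext_iff]
    have h := divDiff_rec f x hx (Fin.last (p+1)) 0 hne
    have e0 : x ∘ (0 : Fin (p+2)).succAbove = fun i : Fin (p+1) => (t+1) + i := by
      funext i
      simp only [Function.comp_apply, Fin.succAbove_zero, hxdef, Fin.val_succ]
      push_cast
      ring
    have eL : x ∘ (Fin.last (p+1)).succAbove = fun i : Fin (p+1) => t + i := by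
      funext i
      simp only [Function.comp_apply, Fin.succAbove_last, hxdef, Fin.coe_castSucc]
    have hval : x (Fin.last (p+1)) - x 0 = (p+1 : ℝ) := by
      simp [hxdef, Fin.val_last]
    rw [e0, eL, ih, ih, hval] at h
    have hfact : (Nat.factorial p : ℝ) ≠ 0 := Nat.cast_ne_zero.mpr (Nat.factorial_ne_zero p)
    have hp1 : ((p:ℝ)+1) ≠ 0 := by positivity
    have hiter : fdiff^[p+1] f t = fdiff^[p] f (t+1) - fdiff^[p] f t := by
      rw [Function.iterate_succ_apply']
      rfl
    rw [hiter, Nat.factorial_succ]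
    push_cast
    rw [eq_div_iff (by positivity)]
    have h2 : divDiff f x = (fdiff^[p] f (t + 1) / ↑p.factorial - fdiff^[p] f t / ↑p.factorial) / ((p:ℝ)+1) := by
      field_simp at h ⊢
      linarith
    rw [h2]
    field_simp

noncomputable def nds (θ : ℝ) (p n : ℕ) : Fin (p+1) → ℝ :=
  Fin.cons ((n:ℝ) + θ) (fun i : Fin p => (n:ℝ) + 1 + i)

lemma nds_zero (θ : ℝ) (p n : ℕ) : nds θ p n 0 = (n:ℝ) + θ := rfl

lemma nds_succ (θ : ℝ) (p n : ℕ) (i : Fin p) : nds θ p n i.succ = (n:ℝ) + 1 + i := by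
  simp [nds]

lemma nds_inj {θ : ℝ} (h0 : 0 < θ) (h1 : θ < 1) (p n : ℕ) :
    Function.Injective (nds θ p n) := by
  intro i j h
  induction i using Fin.cases with
  | zero =>
    induction j using Fin.cases with
    | zero => rfl
    | succ j =>
      exfalso
      rw [nds_zero, nds_succ] at h
      have : (0:ℝ) ≤ (j:ℕ) := Nat.cast_nonneg _
      linarith
  | succ i =>
    induction j using Fin.cases with
    | zero =>
      exfalso
      rw [nds_zero, nds_succ] at h
      have : (0:ℝ) ≤ (i:ℕ) := Nat.cast_nonneg _
      linarith
    | succ j =>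
      rw [nds_succ, nds_succ] at h
      have : ((i : ℕ) : ℝ) = ((j : ℕ) : ℝ) := by linarith
      exact congrArg Fin.succ (Fin.ext (Nat.cast_injective this))

lemma nds_mem {θ : ℝ} (h0 : 0 < θ) {a : ℝ} {n : ℕ} (hn : a < n) (p : ℕ) :
    ∀ i, nds θ p n i ∈ Set.Ioi a := by
  intro i
  induction i using Fin.cases with
  | zero =>
    rw [nds_zero]
    simp only [Set.mem_Ioi]
    linarith
  | succ i =>
    rw [nds_succ]
    simp only [Set.mem_Ioi]
    have : (0:ℝ) ≤ (i:ℕ) := Nat.cast_nonneg _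
    linarith

lemma nds_compLast (θ : ℝ) (p n : ℕ) :
    (nds θ (p+1) n) ∘ (Fin.last (p+1)).succAbove = nds θ p n := by
  funext i
  simp only [Function.comp_apply, Fin.succAbove_last]
  induction i using Fin.cases with
  | zero => simp [nds]
  | succ i =>
    rw [← Fin.succ_castSucc, nds_succ, nds_succ, Fin.coe_castSucc]

lemma nds_comp0 (θ : ℝ) (p n : ℕ) :
    (nds θ (p+1) n) ∘ (0 : Fin (p+2)).succAbove = fun i : Fin (p+1) => ((n+1 : ℕ) : ℝ) + i := by
  funext i
  simp only [Function.comp_apply, Fin.succAbove_zero, nds_succ]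
  push_cast
  ring

lemma key_id (f : ℝ → ℝ) (p n : ℕ) {θ : ℝ} (h0 : 0 < θ) (h1 : θ < 1) :
    divDiff f (nds θ p n) - fdiff^[p] f ((n:ℝ)+1) / (Nat.factorial p)
      = (θ - (p+1)) * divDiff f (nds θ (p+1) n) := by
  have hne : (0 : Fin (p+2)) ≠ Fin.last (p+1) := by
    simp [Fin.ext_iff]
  have h := divDiff_rec f (nds θ (p+1) n) (nds_inj h0 h1 _ _) 0 (Fin.last (p+1)) hne
  rw [nds_compLast, nds_comp0, divDiff_int] at h
  have hv : nds θ (p+1) n 0 - nds θ (p+1) n (Fin.last (p+1)) = θ - ((p:ℝ)+1) := by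
    rw [nds_zero, ← Fin.succ_last, nds_succ, Fin.val_last]
    ring
  rw [hv] at h
  have : (((n+1:ℕ)):ℝ) = (n:ℝ) + 1 := by push_cast; ring
  rw [this] at h
  linarith

noncomputable def lowx (θ : ℝ) (p n : ℕ) : Fin (p+2) → ℝ :=
  Fin.cons ((n:ℝ) + θ) (Fin.cons (n:ℝ) (fun i : Fin p => (n:ℝ) + 1 + i))

lemma lowx_inj {θ : ℝ} (h0 : 0 < θ) (h1 : θ < 1) (p n : ℕ) :
    Function.Injective (lowx θ p n) := by
  unfold lowx
  rw [Fin.cons_injective_iff]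
  constructor
  · rintro ⟨k, hk⟩
    induction k using Fin.cases with
    | zero =>
      simp only [Fin.cons_zero] at hk
      linarith
    | succ j =>
      simp only [Fin.cons_succ] at hk
      have : (0:ℝ) ≤ (j:ℕ) := Nat.cast_nonneg _
      linarith
  · rw [Fin.cons_injective_iff]
    constructor
    · rintro ⟨j, hj⟩
      have : (0:ℝ) ≤ (j:ℕ) := Nat.cast_nonneg _
      simp only at hj
      linarith
    · intro i j hij
      simp only at hij
      have : ((i : ℕ) : ℝ) = ((j : ℕ) : ℝ) := by linarith
      exact Fin.ext (Nat.cast_injective this)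

lemma lowx_mem {θ : ℝ} (h0 : 0 < θ) {a : ℝ} {n : ℕ} (hn : a < n) (p : ℕ) :
    ∀ i, lowx θ p n i ∈ Set.Ioi a := by
  intro i
  simp only [Set.mem_Ioi]
  induction i using Fin.cases with
  | zero => simp only [lowx, Fin.cons_zero]; linarith
  | succ i =>
    induction i using Fin.cases with
    | zero => simpa [lowx] using hn
    | succ j =>
      simp only [lowx, Fin.cons_succ]
      have : (0:ℝ) ≤ (j:ℕ) := Nat.cast_nonneg _
      linarith

lemma low_id (f : ℝ → ℝ) (p n : ℕ) {θ : ℝ} (h0 : 0 < θ) (h1 : θ < 1) :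
    divDiff f (nds θ p n) - fdiff^[p] f (n:ℝ) / (Nat.factorial p)
      = θ * divDiff f (lowx θ p n) := by
  have hne : (0 : Fin (p+2)) ≠ 1 := by simp [Fin.ext_iff]
  have h := divDiff_rec f (lowx θ p n) (lowx_inj h0 h1 _ _) 0 1 hne
  have e1 : (lowx θ p n) ∘ (1 : Fin (p+2)).succAbove = nds θ p n := by
    funext i
    induction i using Fin.cases with
    | zero =>
      simp only [Function.comp_apply, Fin.one_succAbove_zero]
      rfl
    | succ i =>
      have hs : (1 : Fin (p+2)).succAbove i.succ = i.succ.succ := by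
        apply Fin.succAbove_of_le_castSucc
        rw [Fin.le_def]
        simp [Fin.val_one, Fin.val_succ]
      simp only [Function.comp_apply, hs, lowx, Fin.cons_succ, nds_succ]
  have e0 : (lowx θ p n) ∘ (0 : Fin (p+2)).succAbove = fun i : Fin (p+1) => (n:ℝ) + i := by
    funext i
    simp only [Function.comp_apply, Fin.succAbove_zero, lowx, Fin.cons_succ]
    induction i using Fin.cases with
    | zero => simp
    | succ i => simp [Fin.cons_succ, Fin.val_succ]; push_cast; ring
  rw [e1, e0, divDiff_int] at h
  have hv : lowx θ p n 0 - lowx θ p n 1 = θ := by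
    have : (1 : Fin (p+2)) = (0 : Fin (p+1)).succ := rfl
    rw [this]
    simp [lowx, Fin.cons_succ, Fin.cons_zero]
  rw [hv] at h
  linarith


lemma fdiff_iter_neg (g : ℝ → ℝ) : ∀ (r : ℕ) (t : ℝ),
    fdiff^[r] (fun s => -g s) t = -fdiff^[r] g t := by
  intro r
  induction r with
  | zero => intro t; rfl
  | succ r ih =>
    intro t
    rw [Function.iterate_succ_apply', Function.iterate_succ_apply']
    show fdiff^[r] (fun s => -g s) (t+1) - fdiff^[r] (fun s => -g s) t
      = -(fdiff^[r] g (t+1) - fdiff^[r] g t)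
    rw [ih, ih]
    ring

lemma nat_cast_eventually_gt (a : ℝ) : ∀ᶠ n : ℕ in atTop, a < (n : ℝ) := by
  have := tendsto_natCast_atTop_atTop (R := ℝ)
  exact this.eventually (eventually_gt_atTop a)

lemma tendsto_shift (F : ℕ → ℝ) (h : Tendsto F atTop (nhds 0)) :
    Tendsto (fun n => F (n+1)) atTop (nhds 0) :=
  h.comp (tendsto_add_atTop_nat 1)

lemma dd_succ (g : ℝ → ℝ) (r : ℕ)
    (h : Tendsto (fun n : ℕ => fdiff^[r] g n) atTop (nhds 0)) :
    Tendsto (fun n : ℕ => fdiff^[r+1] g n) atTop (nhds 0) := by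
  have hs : Tendsto (fun n : ℕ => fdiff^[r] g ((n:ℝ)+1)) atTop (nhds 0) := by
    refine (tendsto_shift _ h).congr fun n => ?_
    push_cast
    ring_nf
  have h2 : Tendsto (fun n : ℕ => fdiff^[r] g ((n:ℝ)+1) - fdiff^[r] g n) atTop (nhds 0) := by
    simpa using hs.sub h
  refine h2.congr fun n => ?_
  rw [Function.iterate_succ_apply']
  rfl

lemma lift_step (g : ℝ → ℝ) (r : ℕ) {θ : ℝ} (h0 : 0 < θ) (h1 : θ < 1)
    (hdd : Tendsto (fun n : ℕ => fdiff^[r] g n) atTop (nhds 0))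
    (hdv : Tendsto (fun n : ℕ => divDiff g (nds θ r n)) atTop (nhds 0)) :
    Tendsto (fun n : ℕ => divDiff g (nds θ (r+1) n)) atTop (nhds 0) := by
  have hθr : θ - ((r:ℝ)+1) ≠ 0 := by
    have : (0:ℝ) ≤ r := Nat.cast_nonneg r
    intro e; have : θ = (r:ℝ)+1 := by linarith
    linarith
  have hs : Tendsto (fun n : ℕ => fdiff^[r] g ((n:ℝ)+1)) atTop (nhds 0) := by
    refine (tendsto_shift _ hdd).congr fun n => ?_
    push_cast
    ring_nf
  have hshift : Tendsto (fun n : ℕ => fdiff^[r] g ((n:ℝ)+1) / (Nat.factorial r)) atTop (nhds 0) := by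
    simpa using hs.div_const (Nat.factorial r : ℝ)
  have hmain : Tendsto (fun n : ℕ =>
      (divDiff g (nds θ r n) - fdiff^[r] g ((n:ℝ)+1) / (Nat.factorial r)) / (θ - ((r:ℝ)+1)))
      atTop (nhds 0) := by
    simpa using (hdv.sub hshift).div_const (θ - ((r:ℝ)+1))
  refine hmain.congr fun n => ?_
  rw [key_id g r n h0 h1]
  field_simp

lemma lemB (g : ℝ → ℝ) (p : ℕ) (a : ℝ) (hc : ConvexOrderOn g p (Set.Ioi a))
    (hD : Tendsto (fun n : ℕ => fdiff^[p+1] g n) atTop (nhds 0))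
    {θ : ℝ} (h0 : 0 < θ) (h1 : θ < 1) :
    Tendsto (fun n : ℕ => divDiff g (nds θ (p+1) n)) atTop (nhds 0) := by
  set D : ℕ → ℝ := fun n => divDiff g (nds θ p n) - fdiff^[p] g n / (Nat.factorial p) with hDdef
  have hlow : ∀ᶠ n : ℕ in atTop, 0 ≤ D n := by
    filter_upwards [nat_cast_eventually_gt a] with n hn
    rw [hDdef]
    simp only
    rw [low_id g p n h0 h1]
    have := hc (lowx θ p n) (lowx_mem h0 hn p) (lowx_inj h0 h1 p n)
    positivity
  have hupp : ∀ᶠ n : ℕ in atTop, D n ≤ fdiff^[p+1] g n / (Nat.factorial p) := by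
    filter_upwards [nat_cast_eventually_gt a] with n hn
    have hK := hc (nds θ (p+1) n) (nds_mem h0 hn (p+1)) (nds_inj h0 h1 (p+1) n)
    have hkey := key_id g p n h0 h1
    have hθp : θ - ((p:ℝ)+1) ≤ 0 := by
      have : (0:ℝ) ≤ p := Nat.cast_nonneg p
      linarith
    have hineq : divDiff g (nds θ p n) - fdiff^[p] g ((n:ℝ)+1) / (Nat.factorial p) ≤ 0 := by
      rw [hkey]
      exact mul_nonpos_of_nonpos_of_nonneg hθp hK
    have hiter : fdiff^[p+1] g (n:ℝ) = fdiff^[p] g ((n:ℝ)+1) - fdiff^[p] g (n:ℝ) := by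
      rw [Function.iterate_succ_apply']
      rfl
    rw [hDdef]
    simp only
    rw [hiter, sub_div]
    linarith
  have hDt : Tendsto D atTop (nhds 0) := by
    have hquot : Tendsto (fun n : ℕ => fdiff^[p+1] g n / (Nat.factorial p)) atTop (nhds 0) := by
      simpa using hD.div_const (Nat.factorial p : ℝ)
    exact tendsto_of_tendsto_of_tendsto_of_le_of_le' tendsto_const_nhds hquot hlow hupp
  have hquot : Tendsto (fun n : ℕ => fdiff^[p+1] g n / (Nat.factorial p)) atTop (nhds 0) := by
    simpa using hD.div_const (Nat.factorial p : ℝ)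
  have hθr : θ - ((p:ℝ)+1) ≠ 0 := by
    have : (0:ℝ) ≤ p := Nat.cast_nonneg p
    intro e; have : θ = (p:ℝ)+1 := by linarith
    linarith
  have hfin : Tendsto (fun n : ℕ =>
      (D n - fdiff^[p+1] g n / (Nat.factorial p)) / (θ - ((p:ℝ)+1))) atTop (nhds 0) := by
    simpa using (hDt.sub hquot).div_const (θ - ((p:ℝ)+1))
  refine hfin.congr fun n => ?_
  have hiter : fdiff^[p+1] g (n:ℝ) = fdiff^[p] g ((n:ℝ)+1) - fdiff^[p] g (n:ℝ) := by
    rw [Function.iterate_succ_apply']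
    rfl
  have hkey := key_id g p n h0 h1
  rw [hDdef]
  simp only
  rw [hiter, div_eq_iff hθr]
  have hf : (Nat.factorial p : ℝ) ≠ 0 := Nat.cast_ne_zero.mpr (Nat.factorial_ne_zero p)
  field_simp at hkey ⊢
  linarith [hkey]

lemma lemC (g : ℝ → ℝ) (p : ℕ) (a : ℝ) (hc : ConvexOrderOn g p (Set.Ioi a))
    (hD : Tendsto (fun n : ℕ => fdiff^[p+1] g n) atTop (nhds 0))
    {θ : ℝ} (h0 : 0 < θ) (h1 : θ < 1) : ∀ d : ℕ,
    Tendsto (fun n : ℕ => divDiff g (nds θ (p+1+d) n)) atTop (nhds 0) ∧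
    Tendsto (fun n : ℕ => fdiff^[p+1+d] g n) atTop (nhds 0) := by
  intro d
  induction d with
  | zero => exact ⟨lemB g p a hc hD h0 h1, hD⟩
  | succ d ih =>
    exact ⟨lift_step g (p+1+d) h0 h1 ih.2 ih.1, dd_succ g (p+1+d) ih.2⟩

lemma lemC' (g : ℝ → ℝ) (p : ℕ) (hK : EvK p g)
    (hD : Tendsto (fun n : ℕ => fdiff^[p+1] g n) atTop (nhds 0))
    {θ : ℝ} (h0 : 0 < θ) (h1 : θ < 1) :
    ∀ R, p + 1 ≤ R → Tendsto (fun n : ℕ => divDiff g (nds θ R n)) atTop (nhds 0) := by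
  intro R hR
  obtain ⟨d, rfl⟩ : ∃ d, R = p + 1 + d := ⟨R - (p+1), by omega⟩
  rcases hK with ⟨a, -, hc⟩ | ⟨a, -, hc⟩
  · exact (lemC g p a hc hD h0 h1 d).1
  · have hD' : Tendsto (fun n : ℕ => fdiff^[p+1] (fun t => -g t) n) atTop (nhds 0) := by
      have hneg : Tendsto (fun n : ℕ => -(fdiff^[p+1] g n)) atTop (nhds 0) := by
        simpa using hD.neg
      exact hneg.congr fun n => (fdiff_iter_neg g (p+1) n).symm
    have hmain := (lemC (fun t => -g t) p a hc hD' h0 h1 d).1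
    have : Tendsto (fun n : ℕ => -divDiff g (nds θ (p+1+d) n)) atTop (nhds 0) := by
      refine hmain.congr fun n => ?_
      rw [divDiff_neg]
    simpa using this.neg

lemma divDiff_add (f g : ℝ → ℝ) {n : ℕ} (x : Fin n → ℝ) :
    divDiff (fun t => f t + g t) x = divDiff f x + divDiff g x := by
  unfold divDiff
  rw [← Finset.sum_add_distrib]
  exact Finset.sum_congr rfl fun i _ => add_div _ _ _

lemma gbinom_zero_left {k : ℕ} (hk : k ≠ 0) : gbinom 0 k = 0 := by
  unfold gbinom
  rw [Finset.prod_eq_zero (Finset.mem_range.mpr (Nat.pos_of_ne_zero hk))]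
  · simp
  · simp

lemma gbinom_pascal_s19 (y : ℝ) (k : ℕ) :
    gbinom (y+1) (k+1) = gbinom y (k+1) + gbinom y k := by
  unfold gbinom
  have h1 : ∏ i ∈ Finset.range (k+1), (y + 1 - (i:ℕ)) = (y+1) * ∏ i ∈ Finset.range k, (y - (i:ℕ)) := by
    rw [Finset.prod_range_succ']
    have hc : ∀ i ∈ Finset.range k, (y + 1 - ((i+1 : ℕ) : ℝ)) = y - (i:ℕ) := by
      intro i _
      push_cast
      ring
    rw [Finset.prod_congr rfl hc]
    push_cast
    ring
  have h2 : ∏ i ∈ Finset.range (k+1), (y - (i:ℕ)) = (∏ i ∈ Finset.range k, (y - (i:ℕ))) * (y - k) := by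
    rw [Finset.prod_range_succ]
  rw [h1, h2, Nat.factorial_succ]
  have hf : (Nat.factorial k : ℝ) ≠ 0 := Nat.cast_ne_zero.mpr (Nat.factorial_ne_zero k)
  have hk1 : ((k:ℝ) + 1) ≠ 0 := by positivity
  push_cast
  field_simp
  ring

lemma fdiff_iter_succ_point (f : ℝ → ℝ) (k : ℕ) (s : ℝ) :
    fdiff^[k] f (s+1) = fdiff^[k] f s + fdiff^[k+1] f s := by
  rw [Function.iterate_succ_apply']
  show fdiff^[k] f (s+1) = fdiff^[k] f s + (fdiff^[k] f (s+1) - fdiff^[k] f s)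
  ring

lemma fdiff_iter_congr (g h : ℝ → ℝ) : ∀ (q : ℕ) (t : ℝ), (∀ s, t ≤ s → g s = h s) →
    fdiff^[q] g t = fdiff^[q] h t := by
  intro q
  induction q with
  | zero => intro t hgh; exact hgh t le_rfl
  | succ q ih =>
    intro t hgh
    rw [Function.iterate_succ_apply', Function.iterate_succ_apply']
    show fdiff^[q] g (t+1) - fdiff^[q] g t = fdiff^[q] h (t+1) - fdiff^[q] h t
    rw [ih (t+1) (fun s hs => hgh s (by linarith)), ih t hgh]

lemma divDiff_cons_eval (h : ℝ → ℝ) {R : ℕ} (s : ℝ) (y : Fin R → ℝ) (hy : ∀ i, h (y i) = 0) :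
    divDiff h (Fin.cons s y) = h s / ∏ i : Fin R, (s - y i) := by
  set X : Fin (R+1) → ℝ := Fin.cons s y with hX
  unfold divDiff
  rw [Fin.sum_univ_succ]
  have hz : ∀ i : Fin R, h (X i.succ) / ∏ j ∈ Finset.univ.erase i.succ, (X i.succ - X j) = 0 := by
    intro i
    have : h (X i.succ) = 0 := by rw [hX, Fin.cons_succ]; exact hy i
    rw [this, zero_div]
  rw [Finset.sum_eq_zero (fun i _ => hz i), add_zero]
  have hX0 : X 0 = s := by rw [hX, Fin.cons_zero]
  rw [hX0]
  congr 1
  rw [← prod_succAbove 0 (fun j => s - X j)]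
  refine Finset.prod_congr rfl fun k _ => ?_
  rw [Fin.succAbove_zero, hX, Fin.cons_succ]

noncomputable def vv (x a : ℝ) (f : ℝ → ℝ) (k : ℕ) : ℝ → ℝ :=
  fun t => gbinom (x - t + 1) k * (fdiff^[k] f) (t + a - 1)

noncomputable def uu (x a : ℝ) (f : ℝ → ℝ) (k : ℕ) : ℝ → ℝ :=
  fun t => gbinom (x - t) k * (fdiff^[k + 1] f) (t + a - 1)

lemma vv_zero_diff (x a : ℝ) (f : ℝ → ℝ) (t : ℝ) :
    vv x a f 0 (t+1) - vv x a f 0 t = uu x a f 0 t := by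
  unfold vv uu
  simp only [Function.iterate_zero, id_eq, gbinom_zero, one_mul]
  show f (t+1+a-1) - f (t+a-1) = fdiff f (t+a-1)
  show f (t+1+a-1) - f (t+a-1) = f (t+a-1+1) - f (t+a-1)
  rw [show t+1+a-1 = t+a-1+1 from by ring]

lemma vv_succ_diff (x a : ℝ) (f : ℝ → ℝ) (k : ℕ) (t : ℝ) :
    vv x a f (k+1) (t+1) - vv x a f (k+1) t = uu x a f (k+1) t - uu x a f k t := by
  unfold vv uu
  rw [show x - (t+1) + 1 = x - t from by ring,
      show t + 1 + a - 1 = (t + a - 1) + 1 from by ring,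
      fdiff_iter_succ_point, gbinom_pascal_s19 (x - t) k]
  ring

lemma TT_diff (x a : ℝ) (f : ℝ → ℝ) (M : ℕ) (t : ℝ) :
    (∑ k ∈ Finset.range (M+1), vv x a f k (t+1)) - (∑ k ∈ Finset.range (M+1), vv x a f k t)
      = uu x a f M t := by
  induction M with
  | zero => simpa using vv_zero_diff x a f t
  | succ M ih =>
    simp only [Finset.sum_range_succ] at ih ⊢
    have := vv_succ_diff x a f M t
    linarith

/-- Discrete counterpart of Taylor's theorem with a principal-indefinite-sum remainder. -/
theorem stmt_19 (a : ℝ) (ha : 1 ≤ a) (m : ℕ) (f : ℝ → ℝ) (x : ℝ) (hx : 0 ≤ x)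
    (q : ℕ → ℕ)
    (hu : ∀ k ≤ m,
      DD (q k) (fun t => gbinom (x - t) k * (fdiff^[k + 1] f) (t + a - 1)) ∧
      EvK (q k) (fun t => gbinom (x - t) k * (fdiff^[k + 1] f) (t + a - 1)))
    (hv : ∀ k ≤ m, ∃ pk : ℕ, 0 < pk ∧
      DD pk (fun t => gbinom (x - t + 1) k * (fdiff^[k] f) (t + a - 1)) ∧
      EvK pk (fun t => gbinom (x - t + 1) k * (fdiff^[k] f) (t + a - 1)))
    (S : ℝ → ℝ)
    (hSΔ : ∀ t > (0 : ℝ), fdiff S t = gbinom (x - t) m * (fdiff^[m + 1] f) (t + a - 1))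
    (hS1 : S 1 = 0)
    (hSK : EvK (q m) S) :
    f (x + a) = (∑ j ∈ Finset.range (m + 1), gbinom x j * (fdiff^[j] f) a) + S (x + 1) := by
  classical
  choose pkf hpk using hv
  set T : ℝ → ℝ := fun t => ∑ k ∈ Finset.range (m+1), vv x a f k t with hT
  set w : ℝ → ℝ := fun t => T t - S t with hw
  have hwper : ∀ t, 0 < t → w (t+1) = w t := by
    intro t ht
    have h1 := TT_diff x a f m t
    have h2 : S (t+1) - S t = uu x a f m t := hSΔ t ht
    simp only [hw, hT]
    linarith
  have hwnat : ∀ t, 0 < t → ∀ n : ℕ, w (t + n) = w t := by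
    intro t ht n
    induction n with
    | zero => simp
    | succ n ih =>
      have h0n : (0:ℝ) < t + (n:ℕ) := by positivity
      have harg : t + ((n+1 : ℕ) : ℝ) = (t + (n:ℕ)) + 1 := by push_cast; ring
      rw [harg, hwper _ h0n, ih]
  have hT1 : T 1 = ∑ j ∈ Finset.range (m+1), gbinom x j * (fdiff^[j] f) a := by
    simp only [hT]
    refine Finset.sum_congr rfl fun k _ => ?_
    unfold vv
    rw [show x - 1 + 1 = x from by ring, show (1:ℝ) + a - 1 = a from by ring]
  have hTx : T (x+1) = f (x + a) := by
    simp only [hT]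
    rw [Finset.sum_eq_single 0]
    · unfold vv
      rw [gbinom_zero, one_mul, show x+1+a-1 = x+a from by ring]
      simp
    · intro k _ hk
      unfold vv
      rw [show x - (x+1) + 1 = 0 from by ring, gbinom_zero_left hk, zero_mul]
    · intro habs
      exact absurd (Finset.mem_range.mpr (Nat.succ_pos m)) habs
  have hwx : w (x+1) = w 1 := by
    set n0 : ℕ := ⌊x⌋.toNat with hn0
    have hfl : ((n0:ℕ):ℝ) = (⌊x⌋ : ℤ) := by
      rw [hn0]
      exact_mod_cast congrArg (Int.cast : ℤ → ℝ) (Int.toNat_of_nonneg (Int.floor_nonneg.mpr hx))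
    set θ : ℝ := x - n0 with hθdef
    have hθ0 : 0 ≤ θ := by rw [hθdef, hfl]; exact sub_nonneg.mpr (Int.floor_le x)
    have hθ1 : θ < 1 := by
      rw [hθdef, hfl]
      have := Int.lt_floor_add_one x
      linarith
    rcases eq_or_lt_of_le hθ0 with hz | hpos
    · have hxn : x = (n0:ℝ) := by
        have : x - (n0:ℝ) = 0 := hz.symm
        linarith
      rw [show x + 1 = 1 + (n0:ℝ) from by rw [hxn]; ring]
      exact hwnat 1 one_pos n0
    · -- main case : 0 < θ < 1
      set R0 : ℕ := max (q m) ((Finset.range (m+1)).sup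
          (fun k => if h : k ≤ m then pkf k h else 0)) with hR0
      have hRq : q m + 1 ≤ R0 + 1 := by
        have := le_max_left (q m) ((Finset.range (m+1)).sup
          (fun k => if h : k ≤ m then pkf k h else 0))
        omega
      have hRk : ∀ k (hk : k ≤ m), pkf k hk + 1 ≤ R0 + 1 := by
        intro k hk
        have hmem : k ∈ Finset.range (m+1) := Finset.mem_range.mpr (Nat.lt_succ_of_le hk)
        have h1 : pkf k hk ≤ (Finset.range (m+1)).sup (fun k => if h : k ≤ m then pkf k h else 0) := by
          simpa [dif_pos hk] using
            Finset.le_sup (f := fun k => if h : k ≤ m then pkf k h else 0) hmem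
        have h2 := le_max_right (q m) ((Finset.range (m+1)).sup
          (fun k => if h : k ≤ m then pkf k h else 0))
        omega
      have hlimv : ∀ k (hk : k ≤ m),
          Tendsto (fun n : ℕ => divDiff (vv x a f k) (nds θ (R0+1) n)) atTop (nhds 0) := by
        intro k hk
        refine lemC' _ (pkf k hk) (hpk k hk).2.2 ?_ hpos hθ1 (R0+1) (hRk k hk)
        exact dd_succ _ _ (hpk k hk).2.1
      have hDS : Tendsto (fun n : ℕ => fdiff^[q m + 1] S n) atTop (nhds 0) := by
        have hum : Tendsto (fun n : ℕ => fdiff^[q m] (uu x a f m) n) atTop (nhds 0) :=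
          (hu m le_rfl).1
        refine hum.congr' ?_
        filter_upwards [eventually_ge_atTop 1] with n hn
        have hn1 : (1:ℝ) ≤ (n:ℕ) := Nat.one_le_cast.mpr hn
        rw [Function.iterate_succ_apply]
        exact fdiff_iter_congr (uu x a f m) (fdiff S) (q m) n
          (fun s hs => (hSΔ s (by linarith)).symm)
      have hlimS : Tendsto (fun n : ℕ => divDiff S (nds θ (R0+1) n)) atTop (nhds 0) :=
        lemC' S (q m) hSK hDS hpos hθ1 (R0+1) hRq
      set w' : ℝ → ℝ := fun t => w t - w 1 with hw'
      have hlimw : Tendsto (fun n : ℕ => divDiff w' (nds θ (R0+1) n)) atTop (nhds 0) := by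
        have e : ∀ n : ℕ, divDiff w' (nds θ (R0+1) n)
            = ((∑ k ∈ Finset.range (m+1), divDiff (vv x a f k) (nds θ (R0+1) n))
              - divDiff S (nds θ (R0+1) n)) - divDiff (fun _ => w 1) (nds θ (R0+1) n) := by
          intro n
          have e1 : divDiff w' (nds θ (R0+1) n)
              = divDiff w (nds θ (R0+1) n) - divDiff (fun _ => w 1) (nds θ (R0+1) n) := by
            rw [hw', divDiff_sub]
          have e2 : divDiff w (nds θ (R0+1) n)
              = divDiff T (nds θ (R0+1) n) - divDiff S (nds θ (R0+1) n) := by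
            rw [hw, divDiff_sub]
          have e3 : divDiff T (nds θ (R0+1) n)
              = ∑ k ∈ Finset.range (m+1), divDiff (vv x a f k) (nds θ (R0+1) n) := by
            rw [hT, divDiff_sum]
          rw [e1, e2, e3]
        have hconst : ∀ n : ℕ, divDiff (fun _ => w 1) (nds θ (R0+1) n) = 0 := by
          intro n
          exact divDiff_const (w 1) R0 (nds θ (R0+1) n) (nds_inj hpos hθ1 _ _)
        have hsum : Tendsto (fun n : ℕ =>
            ∑ k ∈ Finset.range (m+1), divDiff (vv x a f k) (nds θ (R0+1) n)) atTop (nhds 0) := by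
          have := tendsto_finset_sum (Finset.range (m+1))
            (fun k (hk : k ∈ Finset.range (m+1)) =>
              hlimv k (Nat.lt_succ_iff.mp (Finset.mem_range.mp hk)))
          simpa using this
        have : Tendsto (fun n : ℕ =>
            ((∑ k ∈ Finset.range (m+1), divDiff (vv x a f k) (nds θ (R0+1) n))
              - divDiff S (nds θ (R0+1) n)) - divDiff (fun _ => w 1) (nds θ (R0+1) n))
            atTop (nhds 0) := by
          have h1 := hsum.sub hlimS
          have h2 : Tendsto (fun n : ℕ =>
              divDiff (fun _ => w 1) (nds θ (R0+1) n)) atTop (nhds 0) := by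
            refine tendsto_const_nhds.congr fun n => (hconst n).symm
          simpa using h1.sub h2
        exact this.congr fun n => (e n).symm
      have heval : ∀ n : ℕ, divDiff w' (nds θ (R0+1) n)
          = (w θ - w 1) / ∏ i : Fin (R0+1), (θ - 1 - ((i:ℕ):ℝ)) := by
        intro n
        have hy : ∀ i : Fin (R0+1), w' ((n:ℝ) + 1 + ((i:ℕ):ℝ)) = 0 := by
          intro i
          rw [hw']
          simp only
          have harg : (n:ℝ) + 1 + ((i:ℕ):ℝ) = 1 + (((n + i : ℕ)):ℝ) := by push_cast; ring
          rw [harg, hwnat 1 one_pos (n + i), sub_self]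
        have := divDiff_cons_eval w' ((n:ℝ) + θ) (fun i : Fin (R0+1) => (n:ℝ) + 1 + ((i:ℕ):ℝ)) hy
        have hnds : nds θ (R0+1) n = Fin.cons ((n:ℝ) + θ) (fun i : Fin (R0+1) => (n:ℝ) + 1 + ((i:ℕ):ℝ)) := rfl
        rw [hnds, this]
        have hv1 : w' ((n:ℝ) + θ) = w θ - w 1 := by
          rw [hw']
          simp only
          rw [show (n:ℝ) + θ = θ + (n:ℕ) from by ring, hwnat θ hpos n]
        rw [hv1]
        congr 1
        exact Finset.prod_congr rfl fun i _ => by push_cast; ring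
      have hC : (∏ i : Fin (R0+1), (θ - 1 - ((i:ℕ):ℝ))) ≠ 0 := by
        rw [Finset.prod_ne_zero_iff]
        intro i _
        have : (0:ℝ) ≤ ((i:ℕ):ℝ) := Nat.cast_nonneg _
        have : θ - 1 - ((i:ℕ):ℝ) < 0 := by linarith
        exact ne_of_lt this
      have hzero : (w θ - w 1) / ∏ i : Fin (R0+1), (θ - 1 - ((i:ℕ):ℝ)) = 0 :=
        tendsto_nhds_unique (tendsto_const_nhds.congr fun n => (heval n).symm) hlimw
      have hwθ : w θ = w 1 := by
        have := (div_eq_zero_iff.mp hzero).resolve_right hC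
        linarith
      have hx1 : x + 1 = (1 + θ) + (n0:ℝ) := by rw [hθdef]; ring
      rw [hx1, hwnat (1+θ) (by linarith) n0,
        show (1:ℝ) + θ = θ + 1 from by ring, hwper θ hpos, hwθ]
  have h1 : T (x+1) - S (x+1) = T 1 - S 1 := by
    have := hwx
    simp only [hw] at this
    exact this
  rw [← hT1]
  rw [hS1] at h1
  linarith [hTx]
end
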